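/- arXiv:2201.01714 — 10 statements merged into one kernel-verified Lean document; each statement's English description precedes it below -/
import Mathlib

section
/- Let n ≥ 3 and 1 ≤ d < n. Then Euler's totient φ(n) divides β_n^d. -/
/-- A tuple `v : Fin d → ZMod n` is zero-sum-free if no non-empty subset of its
components sums to zero in `ZMod n`. -/
def ZeroSumFree {n d : ℕ} (v : Fin d → ZMod n) : Prop :=
  ∀ S : Finset (Fin d), S.Nonempty → ∑ i ∈ S, v i ≠ 0

/-- `alphaZSF n d` is the number of zero-sum-free `d`-tuples in `(ZMod n)^d`. -/
noncomputable def alphaZSF (n d : ℕ) : ℕ :=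
  Nat.card {v : Fin d → ZMod n // ZeroSumFree v}

/-- A tuple is irreducible if `gcd(v₁, ..., v_d, n) = 1`, where components are
identified with their representatives in `{0, 1, ..., n-1}`. -/
def IrreducibleTuple {n d : ℕ} (v : Fin d → ZMod n) : Prop :=
  Nat.gcd (Finset.univ.gcd fun i => (v i).val) n = 1

/-- `betaZSF n d` is the number of irreducible zero-sum-free `d`-tuples in `(ZMod n)^d`. -/
noncomputable def betaZSF (n d : ℕ) : ℕ :=
  Nat.card {v : Fin d → ZMod n // ZeroSumFree v ∧ IrreducibleTuple v}

section Aux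

variable {n d : ℕ} [NeZero n]

lemma zsf_smul (u : (ZMod n)ˣ) (v : Fin d → ZMod n) (h : ZeroSumFree v) :
    ZeroSumFree (fun i => (u : ZMod n) * v i) := by
  intro S hS
  rw [← Finset.mul_sum, Ne, Units.mul_right_eq_zero]
  exact h S hS

lemma irr_smul (u : (ZMod n)ˣ) (v : Fin d → ZMod n) (h : IrreducibleTuple v) :
    IrreducibleTuple (fun i => (u : ZMod n) * v i) := by
  unfold IrreducibleTuple at h ⊢
  set g := Nat.gcd (Finset.univ.gcd fun i => ((u : ZMod n) * v i).val) n with hg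
  have hgn : g ∣ n := Nat.gcd_dvd_right _ _
  have hco : Nat.Coprime g (u : ZMod n).val :=
    Nat.Coprime.symm ((ZMod.val_coe_unit_coprime u).coprime_dvd_right hgn)
  have hvi : ∀ i, g ∣ (v i).val := by
    intro i
    have h1 : g ∣ ((u : ZMod n) * v i).val :=
      (Nat.gcd_dvd_left _ _).trans (Finset.gcd_dvd (Finset.mem_univ i))
    rw [ZMod.val_mul] at h1
    have h2 : g ∣ (u : ZMod n).val * (v i).val := (Nat.dvd_mod_iff hgn).mp h1
    exact hco.dvd_of_dvd_mul_left h2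
  have : g ∣ 1 := by
    rw [← h]
    exact Nat.dvd_gcd (Finset.dvd_gcd fun i _ => hvi i) hgn
  exact Nat.dvd_one.mp this

/-- The scaling action of units on irreducible zero-sum-free tuples. -/
instance actX (n d : ℕ) [NeZero n] :
    MulAction (ZMod n)ˣ {v : Fin d → ZMod n // ZeroSumFree v ∧ IrreducibleTuple v} where
  smul u v := ⟨fun i => (u : ZMod n) * v.1 i, zsf_smul u v.1 v.2.1, irr_smul u v.1 v.2.2⟩
  one_smul v := Subtype.ext (funext fun i => one_mul _)
  mul_smul u w v := Subtype.ext (funext fun i => mul_assoc _ _ _)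

lemma smul_coord (u : (ZMod n)ˣ) (x : {v : Fin d → ZMod n // ZeroSumFree v ∧ IrreducibleTuple v})
    (i : Fin d) : ((u • x).1) i = (u : ZMod n) * x.1 i := rfl

lemma free_act (u : (ZMod n)ˣ)
    (x : {v : Fin d → ZMod n // ZeroSumFree v ∧ IrreducibleTuple v})
    (h : u • x = x) : u = 1 := by
  have hirr := x.2.2
  unfold IrreducibleTuple at hirr
  set w : ZMod n := (u : ZMod n) - 1 with hwdef
  have hcoord : ∀ i, (u : ZMod n) * x.1 i = x.1 i := by
    intro i
    have := congrArg (fun y => y.1 i) h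
    simpa [smul_coord] using this
  have hw : ∀ i, w * x.1 i = 0 := by
    intro i; rw [hwdef, sub_mul, one_mul, hcoord i, sub_self]
  have hdvd : ∀ i, n ∣ w.val * (x.1 i).val := by
    intro i
    have h0 : (w * x.1 i).val = 0 := by rw [hw i, ZMod.val_zero]
    rw [ZMod.val_mul] at h0
    exact Nat.dvd_of_mod_eq_zero h0
  have h2 : n ∣ w.val * Finset.univ.gcd (fun i => (x.1 i).val) := by
    have : (Finset.univ.gcd fun i => w.val * (x.1 i).val)
        = w.val * Finset.univ.gcd (fun i => (x.1 i).val) := by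
      simpa using (Finset.gcd_mul_left (s := Finset.univ)
        (f := fun i => (x.1 i).val) (a := w.val))
    rw [← this]
    exact Finset.dvd_gcd fun i _ => hdvd i
  have h3 : n ∣ w.val * n := dvd_mul_left n w.val
  have h4 : n ∣ w.val := by
    have := Nat.dvd_gcd h2 h3
    rwa [Nat.gcd_mul_left, hirr, mul_one] at this
  have hw0 : w = 0 := by
    have h5 : w.val = 0 := Nat.eq_zero_of_dvd_of_lt h4 (ZMod.val_lt w)
    rwa [ZMod.val_eq_zero] at h5
  have : (u : ZMod n) = 1 := by
    have := sub_eq_zero.mp (hwdef ▸ hw0)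
    exact this
  exact Units.ext this

/-- For a free action, each orbit is equivalent to the group. -/
noncomputable def orbitEquiv (x : {v : Fin d → ZMod n // ZeroSumFree v ∧ IrreducibleTuple v}) :
    (ZMod n)ˣ ≃ MulAction.orbit (ZMod n)ˣ x := by
  refine Equiv.ofBijective (fun u => ⟨u • x, MulAction.mem_orbit x u⟩) ⟨?_, ?_⟩
  · intro u w huw
    have h1 : u • x = w • x := Subtype.ext_iff.mp huw
    have : (w⁻¹ * u) • x = x := by rw [mul_smul, h1, ← mul_smul, inv_mul_cancel, one_smul]
    have := free_act _ _ this
    have := inv_mul_eq_one.mp this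
    exact this.symm
  · rintro ⟨y, u, rfl⟩
    exact ⟨u, rfl⟩

end Aux

theorem totient_dvd_beta (n d : ℕ) (hn : 3 ≤ n) (hd1 : 1 ≤ d) (hdn : d < n) :
    Nat.totient n ∣ betaZSF n d := by
  haveI : NeZero n := ⟨by omega⟩
  classical
  have e : {v : Fin d → ZMod n // ZeroSumFree v ∧ IrreducibleTuple v} ≃
      (MulAction.orbitRel.Quotient (ZMod n)ˣ
        {v : Fin d → ZMod n // ZeroSumFree v ∧ IrreducibleTuple v}) × (ZMod n)ˣ :=
    (MulAction.selfEquivSigmaOrbits (ZMod n)ˣ _).trans <|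
      (Equiv.sigmaCongrRight fun ω => (orbitEquiv _).symm).trans
        (Equiv.sigmaEquivProd _ _)
  have hcard : betaZSF n d = Nat.card (MulAction.orbitRel.Quotient (ZMod n)ˣ
        {v : Fin d → ZMod n // ZeroSumFree v ∧ IrreducibleTuple v}) * Nat.card (ZMod n)ˣ := by
    rw [betaZSF, Nat.card_congr e, Nat.card_prod]
  have htot : Nat.card (ZMod n)ˣ = Nat.totient n := by
    rw [Nat.card_eq_fintype_card, ZMod.card_units_eq_totient]
  rw [hcard, htot]
  exact Dvd.intro_left _ rfl
end

section
/- Let n ≥ 3 and 1 ≤ d < n. Then β_n^d = ∑_{m | n, m ≥ 1} μ(n/m) · α_m^d, where the sum runs over all positive divisors m of n and μ is the Möbius function. -/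
/-!
Every tuple `v ∈ (ℤ/nℤ)^d` has a content `g = gcd(v₁, …, v_d, n)`, a divisor of `n`, and
dividing by `g` identifies the zero-sum-free tuples of content `g` with the irreducible
zero-sum-free tuples in `(ℤ/(n/g)ℤ)^d`: the map `w ↦ g·w` from `ℤ/(n/g)ℤ` to `ℤ/nℤ` is an
injective group homomorphism, so it preserves zero-sum-freeness in both directions.
Sorting tuples by content gives `α_n = ∑_{m ∣ n} β_m`, and Möbius inversion gives the claim.
-/

open Finset

def tupleContent {n d : ℕ} (v : Fin d → ZMod n) : ℕ :=
  Nat.gcd (univ.gcd fun i => (v i).val) n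

lemma tupleContent_dvd {n d : ℕ} (v : Fin d → ZMod n) : tupleContent v ∣ n :=
  Nat.gcd_dvd_right _ _

lemma tupleContent_dvd_val {n d : ℕ} (v : Fin d → ZMod n) (j : Fin d) :
    tupleContent v ∣ (v j).val :=
  (Nat.gcd_dvd_left _ _).trans (Finset.gcd_dvd (mem_univ j))

def scaleTuple {m d : ℕ} (n g : ℕ) (w : Fin d → ZMod m) : Fin d → ZMod n :=
  fun j => ((g * (w j).val : ℕ) : ZMod n)

def unscaleTuple {n d : ℕ} (m g : ℕ) (v : Fin d → ZMod n) : Fin d → ZMod m :=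
  fun j => (((v j).val / g : ℕ) : ZMod m)

section Scaling

variable {n m g d : ℕ} [NeZero n]

lemma natCast_mul_eq_zero_iff_of_mul_eq (hgm : g * m = n) (k : ℕ) :
    ((g * k : ℕ) : ZMod n) = 0 ↔ (k : ZMod m) = 0 := by
  have hg : 0 < g := Nat.pos_of_ne_zero (left_ne_zero_of_mul (hgm ▸ NeZero.ne n))
  rw [ZMod.natCast_eq_zero_iff, ZMod.natCast_eq_zero_iff, ← hgm,
    Nat.mul_dvd_mul_iff_left hg]

lemma zeroSumFree_scaleTuple_iff (hgm : g * m = n) (w : Fin d → ZMod m) :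
    ZeroSumFree (scaleTuple n g w) ↔ ZeroSumFree w := by
  have : NeZero m := ⟨right_ne_zero_of_mul (hgm ▸ NeZero.ne n)⟩
  have sum_eq_zero_iff (S : Finset (Fin d)) :
      ∑ j ∈ S, scaleTuple n g w j = 0 ↔ ∑ j ∈ S, w j = 0 := by
    have hsum :
        ∑ j ∈ S, scaleTuple n g w j = ((g * ∑ j ∈ S, (w j).val : ℕ) : ZMod n) := by
      simp only [scaleTuple, Nat.cast_mul, Nat.cast_sum, Finset.mul_sum]
    rw [hsum, natCast_mul_eq_zero_iff_of_mul_eq hgm, Nat.cast_sum]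
    simp only [ZMod.natCast_zmod_val]
  simp only [ZeroSumFree, ne_eq, sum_eq_zero_iff]

lemma val_scaleTuple (hgm : g * m = n) (w : Fin d → ZMod m) (j : Fin d) :
    (scaleTuple n g w j).val = g * (w j).val := by
  have : NeZero m := ⟨right_ne_zero_of_mul (hgm ▸ NeZero.ne n)⟩
  have hg : 0 < g := Nat.pos_of_ne_zero (left_ne_zero_of_mul (hgm ▸ NeZero.ne n))
  refine ZMod.val_cast_of_lt ?_
  calc g * (w j).val < g * m := Nat.mul_lt_mul_of_pos_left (ZMod.val_lt _) hg
    _ = n := hgm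

lemma tupleContent_scaleTuple (hgm : g * m = n) (w : Fin d → ZMod m) :
    tupleContent (scaleTuple n g w) = g * tupleContent w := by
  simp only [tupleContent, val_scaleTuple hgm, Finset.gcd_mul_left, normalize_eq, ← hgm,
    Nat.gcd_mul_left]

lemma unscaleTuple_scaleTuple (hgm : g * m = n) (w : Fin d → ZMod m) :
    unscaleTuple m g (scaleTuple n g w) = w := by
  have : NeZero m := ⟨right_ne_zero_of_mul (hgm ▸ NeZero.ne n)⟩
  have hg : 0 < g := Nat.pos_of_ne_zero (left_ne_zero_of_mul (hgm ▸ NeZero.ne n))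
  funext j
  rw [unscaleTuple, val_scaleTuple hgm, Nat.mul_div_cancel_left _ hg,
    ZMod.natCast_zmod_val]

lemma scaleTuple_unscaleTuple (hgm : g * m = n) {v : Fin d → ZMod n} (hg : g ∣ tupleContent v) :
    scaleTuple n g (unscaleTuple m g v) = v := by
  have hg0 : 0 < g := Nat.pos_of_ne_zero (left_ne_zero_of_mul (hgm ▸ NeZero.ne n))
  funext j
  have hdvd : g ∣ (v j).val := hg.trans (tupleContent_dvd_val v j)
  have hlt : (v j).val / g < m := by
    rw [Nat.div_lt_iff_lt_mul hg0, mul_comm, hgm]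
    exact ZMod.val_lt _
  rw [scaleTuple, unscaleTuple, ZMod.val_cast_of_lt hlt, Nat.mul_div_cancel' hdvd,
    ZMod.natCast_zmod_val]

lemma zeroSumFree_unscaleTuple (hgm : g * m = n) {v : Fin d → ZMod n} (hv : ZeroSumFree v)
    (hg : g ∣ tupleContent v) : ZeroSumFree (unscaleTuple m g v) := by
  rwa [← zeroSumFree_scaleTuple_iff hgm, scaleTuple_unscaleTuple hgm hg]

lemma irreducibleTuple_unscaleTuple (hgm : g * m = n) {v : Fin d → ZMod n}
    (hv : tupleContent v = g) : IrreducibleTuple (unscaleTuple m g v) := by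
  have hg : 0 < g := Nat.pos_of_ne_zero (left_ne_zero_of_mul (hgm ▸ NeZero.ne n))
  show tupleContent _ = 1
  apply Nat.eq_of_mul_eq_mul_left hg
  rw [← tupleContent_scaleTuple hgm, scaleTuple_unscaleTuple hgm (dvd_of_eq hv.symm), hv,
    mul_one]

def scaleEquiv (hgm : g * m = n) :
    {w : Fin d → ZMod m // ZeroSumFree w ∧ IrreducibleTuple w} ≃
      {v : Fin d → ZMod n // ZeroSumFree v ∧ tupleContent v = g} where
  toFun w := ⟨scaleTuple n g w.1, (zeroSumFree_scaleTuple_iff hgm _).2 w.2.1, by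
    rw [tupleContent_scaleTuple hgm, show tupleContent w.1 = 1 from w.2.2, mul_one]⟩
  invFun v := ⟨unscaleTuple m g v.1,
    zeroSumFree_unscaleTuple hgm v.2.1 (dvd_of_eq v.2.2.symm),
    irreducibleTuple_unscaleTuple hgm v.2.2⟩
  left_inv w := Subtype.ext (unscaleTuple_scaleTuple hgm w.1)
  right_inv v := Subtype.ext (scaleTuple_unscaleTuple hgm (dvd_of_eq v.2.2.symm))

lemma betaZSF_eq_card_tupleContent_eq (hgm : g * m = n) :
    betaZSF m d = Nat.card {v : Fin d → ZMod n // ZeroSumFree v ∧ tupleContent v = g} :=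
  Nat.card_congr (scaleEquiv hgm)

end Scaling

lemma alphaZSF_eq_sum_betaZSF (n d : ℕ) [NeZero n] :
    alphaZSF n d = ∑ m ∈ n.divisors, betaZSF m d := by
  classical
  calc alphaZSF n d = #{v : Fin d → ZMod n | ZeroSumFree v} := by
        rw [alphaZSF, Nat.card_eq_fintype_card, Fintype.card_subtype]
    _ = ∑ g ∈ n.divisors, #{v : Fin d → ZMod n | ZeroSumFree v ∧ tupleContent v = g} := by
        rw [card_eq_sum_card_fiberwise (f := tupleContent) (t := n.divisors)]
        · simp only [filter_filter]
        · intro v _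
          exact Nat.mem_divisors.2 ⟨tupleContent_dvd v, NeZero.ne n⟩
    _ = ∑ g ∈ n.divisors, betaZSF (n / g) d := by
        refine sum_congr rfl fun g hg => ?_
        rw [betaZSF_eq_card_tupleContent_eq (Nat.mul_div_cancel' (Nat.dvd_of_mem_divisors hg)),
          Nat.card_eq_fintype_card, Fintype.card_subtype]
    _ = ∑ m ∈ n.divisors, betaZSF m d := Nat.sum_div_divisors n (betaZSF · d)

open ArithmeticFunction ArithmeticFunction.Moebius in
theorem beta_eq_moebius_sum_alpha_general (n d : ℕ) (hn : 3 ≤ n) :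
    (betaZSF n d : ℤ) = ∑ m ∈ n.divisors, μ (n / m) * (alphaZSF m d : ℤ) := by
  have hsum : ∀ k > 0, ∑ m ∈ k.divisors, (betaZSF m d : ℤ) = alphaZSF k d := fun k hk => by
    have : NeZero k := ⟨hk.ne'⟩
    rw [alphaZSF_eq_sum_betaZSF k d, Nat.cast_sum]
  rw [← sum_eq_iff_sum_mul_moebius_eq.1 hsum n (by omega)]
  exact Nat.sum_divisorsAntidiagonal' fun a b => μ a * (alphaZSF b d : ℤ)

open ArithmeticFunction ArithmeticFunction.Moebius in
theorem beta_eq_moebius_sum_alpha (n d : ℕ) (hn : 3 ≤ n) (hd1 : 1 ≤ d) (hdn : d < n) :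
    (betaZSF n d : ℤ) = ∑ m ∈ n.divisors, μ (n / m) * (alphaZSF m d : ℤ) :=
  beta_eq_moebius_sum_alpha_general n d hn
end

section
/- Let n ≥ 3 and 1 ≤ d < n. If d ≥ m for every divisor m of n with 1 ≤ m < n, then α_n^d = β_n^d and Euler's totient φ(n) divides α_n^d. In particular, this conclusion holds whenever d ≥ n/2. -/
/-- Key lemma: under the divisor hypothesis, every zero-sum-free tuple is irreducible. -/
lemma zsf_irred {n d : ℕ} (hn : 3 ≤ n) (hd1 : 1 ≤ d) (hdn : d < n)
    (hdiv : ∀ m : ℕ, m ∣ n → 1 ≤ m → m < n → m ≤ d)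
    (v : Fin d → ZMod n) (hv : ZeroSumFree v) : IrreducibleTuple v := by
  haveI : NeZero n := ⟨by omega⟩
  by_contra hirr
  set G : ℕ := Finset.univ.gcd fun i => (v i).val with hG
  set g : ℕ := Nat.gcd G n with hg
  have hgn : g ∣ n := Nat.gcd_dvd_right _ _
  have hg0 : g ≠ 0 := by
    intro h0
    have := Nat.eq_zero_of_gcd_eq_zero_right (hg ▸ h0)
    omega
  have hgne1 : g ≠ 1 := fun h => hirr h
  have hg2 : 2 ≤ g := by omega
  set m : ℕ := n / g with hm
  have hmg : m * g = n := Nat.div_mul_cancel hgn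
  have hm1 : 1 ≤ m := by
    rcases Nat.eq_zero_or_pos m with h | h
    · exfalso; rw [h, zero_mul] at hmg; omega
    · exact h
  have hmn : m < n := by rw [hm]; exact Nat.div_lt_self (by omega) hg2
  have hmd : m ≤ d := hdiv m ⟨g, hmg.symm⟩ hm1 hmn
  haveI : NeZero m := ⟨by omega⟩
  have hgdvd : ∀ i, g ∣ (v i).val := fun i =>
    dvd_trans (Nat.gcd_dvd_left G n) (Finset.gcd_dvd (Finset.mem_univ i))
  -- reduced tuple in ZMod m
  set w : Fin d → ZMod m := fun i => (((v i).val / g : ℕ) : ZMod m) with hw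
  have key : ∀ S : Finset (Fin d), (∑ i ∈ S, w i) = 0 → (∑ i ∈ S, v i) = 0 := by
    intro S hS
    have h1 : (∑ i ∈ S, w i) = ((∑ i ∈ S, (v i).val / g : ℕ) : ZMod m) := by
      push_cast; rfl
    rw [h1, ZMod.natCast_eq_zero_iff] at hS
    have h2 : (∑ i ∈ S, (v i).val) = g * (∑ i ∈ S, (v i).val / g) := by
      rw [Finset.mul_sum]
      exact Finset.sum_congr rfl fun i _ => (Nat.mul_div_cancel' (hgdvd i)).symm
    have h3 : n ∣ ∑ i ∈ S, (v i).val := by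
      obtain ⟨t, ht⟩ := hS
      exact ⟨t, by rw [h2, ht, ← hmg]; ring⟩
    have h4 : (∑ i ∈ S, v i) = ((∑ i ∈ S, (v i).val : ℕ) : ZMod n) := by
      push_cast [ZMod.natCast_zmod_val]; rfl
    rw [h4, ZMod.natCast_eq_zero_iff]
    exact h3
  -- pigeonhole on prefix sums
  set s : Fin (d + 1) → ZMod m := fun k =>
    ∑ i ∈ Finset.univ.filter (fun i : Fin d => (i : ℕ) < (k : ℕ)), w i with hs
  have hcard : Fintype.card (ZMod m) < Fintype.card (Fin (d + 1)) := by
    rw [ZMod.card, Fintype.card_fin]; omega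
  obtain ⟨a, b, hab, hsab⟩ := Fintype.exists_ne_map_eq_of_card_lt s hcard
  wlog hlt : (a : ℕ) < (b : ℕ) generalizing a b
  · exact this b a hab.symm hsab.symm (by have := Fin.val_ne_of_ne hab; omega)
  set S : Finset (Fin d) := Finset.univ.filter
    (fun i : Fin d => (a : ℕ) ≤ (i : ℕ) ∧ (i : ℕ) < (b : ℕ)) with hSdef
  have hSne : S.Nonempty := by
    refine ⟨⟨a, by omega⟩, ?_⟩
    simp [hSdef]
    omega
  have hsplit : Finset.univ.filter (fun i : Fin d => (i : ℕ) < (b : ℕ)) =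
      (Finset.univ.filter fun i : Fin d => (i : ℕ) < (a : ℕ)) ∪ S := by
    ext i
    simp [hSdef]
    omega
  have hdisj : Disjoint (Finset.univ.filter fun i : Fin d => (i : ℕ) < (a : ℕ)) S := by
    rw [Finset.disjoint_left]
    intro i hi hi'
    simp [hSdef] at hi hi'
    omega
  have hsum : s b = s a + ∑ i ∈ S, w i := by
    rw [hs]
    simp only []
    rw [hsplit, Finset.sum_union hdisj]
  have hSw : (∑ i ∈ S, w i) = 0 := by
    have := hsab
    rw [hsum] at this
    linear_combination -this
  exact hv S hSne (key S hSw)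

section action

variable (n d : ℕ)

/-- The scaling action of units on zero-sum-free tuples. -/
noncomputable instance zsfAction :
    MulAction (ZMod n)ˣ {v : Fin d → ZMod n // ZeroSumFree v} where
  smul u v := ⟨fun i => (u : ZMod n) * v.1 i, by
    intro S hS h
    refine v.2 S hS ?_
    have : (u : ZMod n) * ∑ i ∈ S, v.1 i = 0 := by
      rw [Finset.mul_sum]; exact h
    exact (Units.mul_right_eq_zero u).mp this⟩
  one_smul v := by
    apply Subtype.ext
    funext i
    show ((1 : (ZMod n)ˣ) : ZMod n) * v.1 i = v.1 i
    simp
  mul_smul x y v := by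
    apply Subtype.ext
    funext i
    show ((x * y : (ZMod n)ˣ) : ZMod n) * v.1 i = (x : ZMod n) * ((y : ZMod n) * v.1 i)
    push_cast
    ring

end action

lemma annihilate_gcd {n : ℕ} (c : ZMod n) {ι : Type*} (f : ι → ℕ) (s : Finset ι)
    (hf : ∀ i ∈ s, c * (f i : ZMod n) = 0) : c * ((s.gcd f : ℕ) : ZMod n) = 0 := by
  classical
  induction s using Finset.induction_on with
  | empty => simp
  | @insert a t hat ih =>
    rw [Finset.gcd_insert]
    have h1 : c * ((f a : ℕ) : ZMod n) = 0 := hf a (Finset.mem_insert_self a t)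
    have h2 : c * ((t.gcd f : ℕ) : ZMod n) = 0 := ih fun i hi => hf i (Finset.mem_insert_of_mem hi)
    -- gcd = f a * gcdA + gcd t f * gcdB over ℤ
    have hbez := Nat.gcd_eq_gcd_ab (f a) (t.gcd f)
    have : ((Nat.gcd (f a) (t.gcd f) : ℤ) : ZMod n) =
        ((f a : ℤ) : ZMod n) * ((Nat.gcdA (f a) (t.gcd f) : ℤ) : ZMod n) +
        (((t.gcd f : ℕ) : ℤ) : ZMod n) * ((Nat.gcdB (f a) (t.gcd f) : ℤ) : ZMod n) := by
      rw [hbez]; push_cast; ring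
    push_cast at this
    rw [gcd_eq_nat_gcd, this]
    rw [mul_comm] at h1 h2
    calc c * (((f a : ℕ) : ZMod n) * ((Nat.gcdA (f a) (t.gcd f) : ℤ) : ZMod n) +
          ((t.gcd f : ℕ) : ZMod n) * ((Nat.gcdB (f a) (t.gcd f) : ℤ) : ZMod n))
        = (c * (f a : ℕ)) * ((Nat.gcdA (f a) (t.gcd f) : ℤ) : ZMod n) +
          (c * ((t.gcd f : ℕ) : ZMod n)) * ((Nat.gcdB (f a) (t.gcd f) : ℤ) : ZMod n) := by ring
      _ = 0 := by rw [mul_comm c, mul_comm c] at *; rw [h1, h2]; ring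

theorem alpha_eq_beta_of_large_d (n d : ℕ) (hn : 3 ≤ n) (hd1 : 1 ≤ d) (hdn : d < n) :
    ((∀ m : ℕ, m ∣ n → 1 ≤ m → m < n → m ≤ d) →
      alphaZSF n d = betaZSF n d ∧ Nat.totient n ∣ alphaZSF n d) ∧
    (n ≤ 2 * d →
      alphaZSF n d = betaZSF n d ∧ Nat.totient n ∣ alphaZSF n d) := by
  haveI : NeZero n := ⟨by omega⟩
  have main : (∀ m : ℕ, m ∣ n → 1 ≤ m → m < n → m ≤ d) →
      alphaZSF n d = betaZSF n d ∧ Nat.totient n ∣ alphaZSF n d := by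
    intro hdiv
    have hirr := zsf_irred hn hd1 hdn hdiv
    constructor
    · unfold alphaZSF betaZSF
      exact Nat.card_congr (Equiv.subtypeEquivRight fun v =>
        ⟨fun h => ⟨h, hirr v h⟩, And.left⟩)
    · -- free action of units
      set X := {v : Fin d → ZMod n // ZeroSumFree v}
      set G := (ZMod n)ˣ
      have hstab : ∀ x : X, MulAction.stabilizer G x = ⊥ := by
        intro x
        rw [Subgroup.eq_bot_iff_forall]
        intro u hu
        have hux : u • x = x := hu
        have hcomp : ∀ i, (u : ZMod n) * x.1 i = x.1 i := by
          intro i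
          have := congrArg (fun y : X => y.1 i) hux
          exact this
        set c : ZMod n := (u : ZMod n) - 1 with hc
        have hci : ∀ i, c * ((x.1 i).val : ZMod n) = 0 := by
          intro i
          rw [ZMod.natCast_zmod_val]
          rw [hc, sub_mul, one_mul, hcomp i, sub_self]
        have h1 : c * ((Finset.univ.gcd fun i => (x.1 i).val : ℕ) : ZMod n) = 0 :=
          annihilate_gcd c _ _ fun i _ => hci i
        have h2 : c * ((n : ℕ) : ZMod n) = 0 := by simp
        have h3 : c * ((Nat.gcd (Finset.univ.gcd fun i => (x.1 i).val) n : ℕ) : ZMod n) = 0 := by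
          have hbez := Nat.gcd_eq_gcd_ab (Finset.univ.gcd fun i => (x.1 i).val) n
          set A := (Finset.univ.gcd fun i => (x.1 i).val)
          have : ((Nat.gcd A n : ℤ) : ZMod n) = ((A : ℤ) : ZMod n) * ((Nat.gcdA A n : ℤ) : ZMod n)
              + ((n : ℤ) : ZMod n) * ((Nat.gcdB A n : ℤ) : ZMod n) := by rw [hbez]; push_cast; ring
          push_cast at this
          rw [this, mul_add, ← mul_assoc, ← mul_assoc, h1, h2, zero_mul, zero_mul, add_zero]
        have hx1 : IrreducibleTuple x.1 := hirr x.1 x.2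
        rw [IrreducibleTuple] at hx1
        rw [hx1] at h3
        simp at h3
        have : (u : ZMod n) = 1 := by
          have : c = 0 := h3
          rw [hc] at this
          linear_combination this
        exact Units.ext this
      -- orbit decomposition
      have e1 := MulAction.selfEquivSigmaOrbitsQuotientStabilizer G X
      have e2 : X ≃ (MulAction.orbitRel.Quotient G X) × G := by
        refine e1.trans ((Equiv.sigmaCongrRight fun ω => ?_).trans
          (Equiv.sigmaEquivProd _ G))
        rw [hstab]
        exact (QuotientGroup.quotientBot (G := G)).toEquiv
      have hcard : Nat.card X = Nat.card (MulAction.orbitRel.Quotient G X) * Nat.card G := by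
        rw [Nat.card_congr e2, Nat.card_prod]
      have hGcard : Nat.card G = Nat.totient n := by
        rw [Nat.card_eq_fintype_card, ZMod.card_units_eq_totient]
      unfold alphaZSF
      exact ⟨Nat.card (MulAction.orbitRel.Quotient G X), by rw [hcard, hGcard]; ring⟩
  refine ⟨main, fun h2d => main ?_⟩
  intro m hm h1m hmn
  obtain ⟨k, rfl⟩ := hm
  have hk2 : 2 ≤ k := by
    rcases Nat.lt_or_ge k 2 with h | h
    · interval_cases k <;> omega
    · exact h
  nlinarith
end

section
/- Let p be a prime and t a positive integer with p^t ≥ 3, and let d be an integer with 1 ≤ d < p^t. Then α_{p^t}^d = β_{p^t}^d + α_{p^{t−1}}^d. -/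
section Aux

variable {p t d : ℕ}

lemma sum_lemma (hp : Nat.Prime p) (ht : 1 ≤ t) (S : Finset (Fin d))
    (w : Fin d → ZMod (p ^ (t-1))) :
    (∑ i ∈ S, ((p * (w i).val : ℕ) : ZMod (p ^ t)) = 0) ↔ ∑ i ∈ S, w i = 0 := by
  haveI : NeZero (p ^ t) := ⟨pow_ne_zero _ hp.pos.ne'⟩
  haveI : NeZero (p ^ (t-1)) := ⟨pow_ne_zero _ hp.pos.ne'⟩
  have hn : p ^ t = p * p ^ (t - 1) := by
    rw [← pow_succ', Nat.sub_add_cancel ht]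
  rw [← Nat.cast_sum, ZMod.natCast_eq_zero_iff, ← Finset.mul_sum, hn,
    mul_dvd_mul_iff_left (a := p) hp.pos.ne']
  rw [← ZMod.natCast_eq_zero_iff, Nat.cast_sum]
  constructor <;> intro h <;> [rw [← h]; rw [← h]] <;>
    exact Finset.sum_congr rfl fun i _ => by
      simp [ZMod.natCast_rightInverse (w i)]

lemma irr_lemma (hp : Nat.Prime p) (ht : 1 ≤ t) (v : Fin d → ZMod (p ^ t)) :
    ¬ IrreducibleTuple v ↔ ∀ i, p ∣ (v i).val := by
  unfold IrreducibleTuple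
  constructor
  · intro h i
    have hg : Nat.gcd (Finset.univ.gcd fun i => (v i).val) (p ^ t) ∣ p ^ t :=
      Nat.gcd_dvd_right _ _
    obtain ⟨k, hk, he⟩ := (Nat.dvd_prime_pow hp).mp hg
    have hk1 : 1 ≤ k := by
      rcases Nat.eq_zero_or_pos k with h0 | h1
      · exfalso; apply h; rw [he, h0, pow_zero]
      · exact h1
    have hpd : p ∣ Nat.gcd (Finset.univ.gcd fun i => (v i).val) (p ^ t) := by
      rw [he]; exact dvd_pow_self p (by omega : k ≠ 0)
    have := hpd.trans (Nat.gcd_dvd_left _ _)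
    rw [Finset.dvd_gcd_iff] at this
    exact this i (Finset.mem_univ i)
  · intro h hc
    have hpd : p ∣ Nat.gcd (Finset.univ.gcd fun i => (v i).val) (p ^ t) :=
      Nat.dvd_gcd (Finset.dvd_gcd_iff.mpr fun i _ => h i)
        (dvd_pow_self p (by omega))
    rw [hc] at hpd
    exact hp.one_lt.ne' (Nat.dvd_one.mp hpd)

end Aux

theorem alpha_prime_power_rec (p t d : ℕ) (hp : Nat.Prime p) (ht : 1 ≤ t)
    (hpt : 3 ≤ p ^ t) (hd1 : 1 ≤ d) (hdn : d < p ^ t) :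
    alphaZSF (p ^ t) d = betaZSF (p ^ t) d + alphaZSF (p ^ (t - 1)) d := by
  classical
  haveI : NeZero (p ^ t) := ⟨pow_ne_zero _ hp.pos.ne'⟩
  haveI : NeZero (p ^ (t-1)) := ⟨pow_ne_zero _ hp.pos.ne'⟩
  set n := p ^ t with hnn
  set m := p ^ (t-1) with hmm
  have hn : n = p * m := by rw [hnn, hmm, ← pow_succ', Nat.sub_add_cancel ht]
  -- Equivalence between non-irreducible ZSF tuples and ZSF tuples mod m
  have hvlt : ∀ w : Fin d → ZMod m, ∀ i, p * (w i).val < n := by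
    intro w i
    rw [hn]
    exact (mul_lt_mul_iff_right₀ hp.pos).mpr (ZMod.val_lt (w i))
  have key : ∀ (w : Fin d → ZMod m) (S : Finset (Fin d)),
      (∑ i ∈ S, ((p * (w i).val : ℕ) : ZMod n) = 0) ↔ ∑ i ∈ S, w i = 0 :=
    fun w S => sum_lemma hp ht S w
  let f : {w : Fin d → ZMod m // ZeroSumFree w} →
      {v : Fin d → ZMod n // ZeroSumFree v ∧ ¬ IrreducibleTuple v} := fun ⟨w, hw⟩ =>
    ⟨fun i => ((p * (w i).val : ℕ) : ZMod n),
      ⟨fun S hS h => hw S hS ((key w S).mp h),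
        (irr_lemma hp ht _).mpr fun i => by
          rw [ZMod.val_natCast_of_lt (hvlt w i)]; exact Dvd.intro _ rfl⟩⟩
  have hfbij : Function.Bijective f := by
    constructor
    · rintro ⟨w₁, h₁⟩ ⟨w₂, h₂⟩ h
      simp only [f, Subtype.mk.injEq] at h
      ext i
      have := congrFun h i
      have h1 := congrArg ZMod.val this
      rw [ZMod.val_natCast_of_lt (hvlt w₁ i), ZMod.val_natCast_of_lt (hvlt w₂ i)] at h1
      have hval : (w₁ i).val = (w₂ i).val := Nat.eq_of_mul_eq_mul_left hp.pos h1
      have := congrArg (fun x : ℕ => (x : ZMod m)) hval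
      simpa [ZMod.natCast_rightInverse (w₁ i), ZMod.natCast_rightInverse (w₂ i)] using this
    · rintro ⟨v, hzsf, hirr⟩
      have hdvd : ∀ i, p ∣ (v i).val := (irr_lemma hp ht v).mp hirr
      refine ⟨⟨fun i => (((v i).val / p : ℕ) : ZMod m), ?_⟩, ?_⟩
      case refine_2 =>
        simp only [f, Subtype.mk.injEq]
        funext i
        have hlt : (v i).val / p < m :=
          Nat.div_lt_of_lt_mul (by rw [← hn]; exact ZMod.val_lt (v i))
        rw [ZMod.val_natCast_of_lt hlt, Nat.mul_div_cancel' (hdvd i)]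
        exact ZMod.natCast_rightInverse (v i)
      case refine_1 =>
        intro S hS h
        apply hzsf S hS
        have := (key (fun i => (((v i).val / p : ℕ) : ZMod m)) S).mpr h
        calc ∑ i ∈ S, v i
            = ∑ i ∈ S, ((p * ((((v i).val / p : ℕ) : ZMod m)).val : ℕ) : ZMod n) := by
              refine Finset.sum_congr rfl fun i _ => ?_
              have hlt : (v i).val / p < m :=
                Nat.div_lt_of_lt_mul (by rw [← hn]; exact ZMod.val_lt (v i))
              rw [ZMod.val_natCast_of_lt hlt, Nat.mul_div_cancel' (hdvd i)]
              exact (ZMod.natCast_rightInverse (v i)).symm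
          _ = 0 := this
  -- counting
  have hcard : Nat.card {v : Fin d → ZMod n // ZeroSumFree v ∧ ¬ IrreducibleTuple v} =
      alphaZSF m d := (Nat.card_eq_of_bijective _ hfbij).symm
  have hsplit : alphaZSF n d = betaZSF n d +
      Nat.card {v : Fin d → ZMod n // ZeroSumFree v ∧ ¬ IrreducibleTuple v} := by
    unfold alphaZSF betaZSF
    rw [← Nat.card_sum]
    apply Nat.card_congr
    refine Equiv.symm (Equiv.trans ?_ (Equiv.sumCompl
      (fun v : {v : Fin d → ZMod n // ZeroSumFree v} => IrreducibleTuple v.1)))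
    exact Equiv.sumCongr
      (Equiv.subtypeSubtypeEquivSubtypeInter _ _).symm
      (Equiv.subtypeSubtypeEquivSubtypeInter ZeroSumFree (fun v => ¬ IrreducibleTuple v)).symm
  rw [hsplit, hcard]
end

section
/- Let p_1 and p_2 be two distinct primes and let d be an integer with 1 ≤ d < p_1·p_2. Then α_{p_1 p_2}^d = β_{p_1 p_2}^d + α_{p_1}^d + α_{p_2}^d. -/
open Classical in
lemma card_split_aux {α : Type*} [Finite α] (P Q : α → Prop) :
    Nat.card {x : α // P x} = Nat.card {x // P x ∧ Q x} + Nat.card {x // P x ∧ ¬ Q x} := by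
  rw [← Nat.card_sum]
  refine Nat.card_congr ?_
  exact (Equiv.sumCompl (fun x : {x // P x} => Q x.1)).symm.trans
    (Equiv.sumCongr (Equiv.subtypeSubtypeEquivSubtypeInter P Q)
      (Equiv.subtypeSubtypeEquivSubtypeInter P fun x => ¬ Q x))

/-- General zero-sum-free predicate for tuples in any additive monoid. -/
def ZSFgen {d : ℕ} {M : Type*} [AddCommMonoid M] (v : Fin d → M) : Prop :=
  ∀ S : Finset (Fin d), S.Nonempty → ∑ i ∈ S, v i ≠ 0

lemma zsf_eq_zsfgen {n d : ℕ} (v : Fin d → ZMod n) : ZeroSumFree v ↔ ZSFgen v := Iff.rfl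

lemma zsfgen_map {d : ℕ} {M N : Type*} [AddCommMonoid M] [AddCommMonoid N] (e : M ≃+ N)
    (v : Fin d → M) : ZSFgen (fun i => e (v i)) ↔ ZSFgen v := by
  refine forall₂_congr fun S hS => not_congr ?_
  rw [← map_sum]
  exact EmbeddingLike.map_eq_zero_iff

lemma zsfgen_pair {d : ℕ} {M N : Type*} [AddCommMonoid M] [AddCommMonoid N] (u : Fin d → N) :
    ZSFgen (fun i => ((0 : M), u i)) ↔ ZSFgen u := by
  refine forall₂_congr fun S hS => not_congr ?_
  simp [Prod.ext_iff, Prod.fst_sum, Prod.snd_sum]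

lemma count_div_eq_alpha {d n m k : ℕ} [NeZero n] [NeZero k]
    (c : ZMod n ≃+* ZMod m × ZMod k)
    (hc : ∀ x : ZMod n, m ∣ x.val ↔ (c x).1 = 0) :
    Nat.card {v : Fin d → ZMod n // ZeroSumFree v ∧ ∀ i, m ∣ (v i).val} = alphaZSF k d := by
  refine Nat.card_congr (Equiv.symm ?_)
  refine
    { toFun := fun u => ⟨fun i => c.symm (0, u.1 i), ?_, ?_⟩
      invFun := fun v => ⟨fun i => (c (v.1 i)).2, ?_⟩
      left_inv := ?_
      right_inv := ?_ }
  · rw [zsf_eq_zsfgen]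
    exact (zsfgen_map c.symm.toAddEquiv (fun i => ((0 : ZMod m), u.1 i))).mpr
      ((zsfgen_pair u.1).mpr ((zsf_eq_zsfgen u.1).mp u.2))
  · intro i
    rw [hc]
    simp
  · have h1 : ∀ i, c (v.1 i) = ((0 : ZMod m), (c (v.1 i)).2) := by
      intro i
      exact Prod.ext ((hc (v.1 i)).mp (v.2.2 i)) rfl
    have h2 : ZSFgen (fun i => c (v.1 i)) :=
      (zsfgen_map c.toAddEquiv v.1).mpr ((zsf_eq_zsfgen v.1).mp v.2.1)
    rw [funext h1] at h2
    exact (zsf_eq_zsfgen _).mpr ((zsfgen_pair _).mp h2)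
  · intro u
    ext i
    simp
  · intro v
    ext i
    have h1 : c (v.1 i) = ((0 : ZMod m), (c (v.1 i)).2) :=
      Prod.ext ((hc (v.1 i)).mp (v.2.2 i)) rfl
    simp only
    rw [← h1]
    simp

theorem alpha_two_primes_rec (p₁ p₂ d : ℕ) (hp₁ : Nat.Prime p₁) (hp₂ : Nat.Prime p₂)
    (hne : p₁ ≠ p₂) (hd1 : 1 ≤ d) (hdn : d < p₁ * p₂) :
    alphaZSF (p₁ * p₂) d = betaZSF (p₁ * p₂) d + alphaZSF p₁ d + alphaZSF p₂ d := by
  haveI : NeZero p₁ := ⟨hp₁.pos.ne'⟩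
  haveI : NeZero p₂ := ⟨hp₂.pos.ne'⟩
  haveI : NeZero (p₁ * p₂) := ⟨mul_ne_zero hp₁.pos.ne' hp₂.pos.ne'⟩
  have hco : Nat.Coprime p₁ p₂ := (Nat.coprime_primes hp₁ hp₂).mpr hne
  set c := ZMod.chineseRemainder hco with hc_def
  have hc1 : ∀ x : ZMod (p₁ * p₂), p₁ ∣ x.val ↔ (c x).1 = 0 := by
    intro x
    have hcx : c x = ZMod.castHom (show Nat.lcm p₁ p₂ ∣ p₁ * p₂ by
        simp [Nat.lcm_dvd_iff]) (ZMod p₁ × ZMod p₂) x := rfl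
    have h : (c x).1 = ((x.val : ℕ) : ZMod p₁) := by
      rw [hcx, ZMod.castHom_apply, Prod.fst_zmod_cast, ← ZMod.natCast_val]
    rw [h, ZMod.natCast_eq_zero_iff]
  have hc2 : ∀ x : ZMod (p₁ * p₂), p₂ ∣ x.val ↔ (c x).2 = 0 := by
    intro x
    have hcx : c x = ZMod.castHom (show Nat.lcm p₁ p₂ ∣ p₁ * p₂ by
        simp [Nat.lcm_dvd_iff]) (ZMod p₁ × ZMod p₂) x := rfl
    have h : (c x).2 = ((x.val : ℕ) : ZMod p₂) := by
      rw [hcx, ZMod.castHom_apply, Prod.snd_zmod_cast, ← ZMod.natCast_val]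
    rw [h, ZMod.natCast_eq_zero_iff]
  -- key facts about divisibility and irreducibility
  have key1 : ∀ (p : ℕ), Nat.Prime p → p ∣ p₁ * p₂ → ∀ v : Fin d → ZMod (p₁ * p₂),
      (∀ i, p ∣ (v i).val) → ¬ IrreducibleTuple v := by
    intro p hp hpd v hdvd hirr
    have h1 : p ∣ Finset.univ.gcd fun i => (v i).val :=
      Finset.dvd_gcd fun i _ => hdvd i
    have h2 : p ∣ Nat.gcd (Finset.univ.gcd fun i => (v i).val) (p₁ * p₂) :=
      Nat.dvd_gcd h1 hpd
    rw [hirr] at h2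
    exact hp.one_lt.ne' (Nat.dvd_one.mp h2)
  have keyboth : ∀ v : Fin d → ZMod (p₁ * p₂), ZeroSumFree v →
      ¬ ((∀ i, p₁ ∣ (v i).val) ∧ (∀ i, p₂ ∣ (v i).val)) := by
    rintro v hzsf ⟨h1, h2⟩
    have i0 : Fin d := ⟨0, hd1⟩
    have hdvd : p₁ * p₂ ∣ (v i0).val := Nat.Coprime.mul_dvd_of_dvd_of_dvd hco (h1 i0) (h2 i0)
    have hlt : (v i0).val < p₁ * p₂ := ZMod.val_lt _
    have hval : (v i0).val = 0 := Nat.eq_zero_of_dvd_of_lt hdvd hlt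
    have hv0 : v i0 = 0 := (ZMod.val_eq_zero _).mp hval
    have := hzsf {i0} (Finset.singleton_nonempty i0)
    simp [hv0] at this
  have key4 : ∀ v : Fin d → ZMod (p₁ * p₂), ¬ IrreducibleTuple v →
      (∀ i, p₁ ∣ (v i).val) ∨ (∀ i, p₂ ∣ (v i).val) := by
    intro v hirr
    have hgne : Nat.gcd (Finset.univ.gcd fun i => (v i).val) (p₁ * p₂) ≠ 1 := hirr
    set g := Nat.gcd (Finset.univ.gcd fun i => (v i).val) (p₁ * p₂)
    have hq : Nat.Prime g.minFac := Nat.minFac_prime hgne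
    have hqg : g.minFac ∣ g := Nat.minFac_dvd g
    have hqn : g.minFac ∣ p₁ * p₂ := hqg.trans (Nat.gcd_dvd_right _ _)
    have hqv : ∀ i, g.minFac ∣ (v i).val := fun i =>
      (hqg.trans (Nat.gcd_dvd_left _ _)).trans (Finset.gcd_dvd (Finset.mem_univ i))
    rcases (Nat.Prime.dvd_mul hq).mp hqn with h | h
    · left
      intro i
      have he : g.minFac = p₁ := (Nat.prime_dvd_prime_iff_eq hq hp₁).mp h
      have hv := hqv i
      rwa [he] at hv
    · right
      intro i
      have he : g.minFac = p₂ := (Nat.prime_dvd_prime_iff_eq hq hp₂).mp h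
      have hv := hqv i
      rwa [he] at hv
  -- split the count
  have step1 : alphaZSF (p₁ * p₂) d = betaZSF (p₁ * p₂) d +
      Nat.card {v : Fin d → ZMod (p₁ * p₂) // ZeroSumFree v ∧ ¬ IrreducibleTuple v} :=
    card_split_aux ZeroSumFree IrreducibleTuple
  have step2 : Nat.card {v : Fin d → ZMod (p₁ * p₂) // ZeroSumFree v ∧ ¬ IrreducibleTuple v} =
      Nat.card {v : Fin d → ZMod (p₁ * p₂) //
        (ZeroSumFree v ∧ ¬ IrreducibleTuple v) ∧ ∀ i, p₁ ∣ (v i).val} +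
      Nat.card {v : Fin d → ZMod (p₁ * p₂) //
        (ZeroSumFree v ∧ ¬ IrreducibleTuple v) ∧ ¬ ∀ i, p₁ ∣ (v i).val} :=
    card_split_aux _ _
  have eqA : Nat.card {v : Fin d → ZMod (p₁ * p₂) //
        (ZeroSumFree v ∧ ¬ IrreducibleTuple v) ∧ ∀ i, p₁ ∣ (v i).val} =
      Nat.card {v : Fin d → ZMod (p₁ * p₂) // ZeroSumFree v ∧ ∀ i, p₁ ∣ (v i).val} := by
    refine Nat.card_congr (Equiv.subtypeEquivRight fun v => ?_)
    constructor
    · rintro ⟨⟨h1, _⟩, h3⟩; exact ⟨h1, h3⟩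
    · rintro ⟨h1, h3⟩
      exact ⟨⟨h1, key1 p₁ hp₁ (dvd_mul_right _ _) v h3⟩, h3⟩
  have eqB : Nat.card {v : Fin d → ZMod (p₁ * p₂) //
        (ZeroSumFree v ∧ ¬ IrreducibleTuple v) ∧ ¬ ∀ i, p₁ ∣ (v i).val} =
      Nat.card {v : Fin d → ZMod (p₁ * p₂) // ZeroSumFree v ∧ ∀ i, p₂ ∣ (v i).val} := by
    refine Nat.card_congr (Equiv.subtypeEquivRight fun v => ?_)
    constructor
    · rintro ⟨⟨h1, h2⟩, h3⟩
      rcases key4 v h2 with h | h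
      · exact absurd h h3
      · exact ⟨h1, h⟩
    · rintro ⟨h1, h3⟩
      refine ⟨⟨h1, key1 p₂ hp₂ (dvd_mul_left _ _) v h3⟩, fun hall => ?_⟩
      exact keyboth v h1 ⟨hall, h3⟩
  have eqC : Nat.card {v : Fin d → ZMod (p₁ * p₂) // ZeroSumFree v ∧ ∀ i, p₁ ∣ (v i).val} =
      alphaZSF p₂ d := count_div_eq_alpha c hc1
  have eqD : Nat.card {v : Fin d → ZMod (p₁ * p₂) // ZeroSumFree v ∧ ∀ i, p₂ ∣ (v i).val} =
      alphaZSF p₁ d := by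
    refine count_div_eq_alpha (c.trans (RingEquiv.prodComm)) fun x => ?_
    rw [hc2 x]
    rfl
  rw [step1, step2, eqA, eqB, eqC, eqD]
  ring
end

section
/- For every fixed positive integer k, there exists N such that for all n ≥ N (with n − k ≥ 1), α_n^{n−k} = φ(n) · C(n−1, k−1), where C(n−1, k−1) denotes the binomial coefficient. -/
/-!
Order the indices of a zero-sum-free tuple `v` of length `d` as a list. Its `d + 1` prefix sums
(the empty one included) are distinct, and swapping two adjacent entries of different values
gives a subset sum different from all of them. So fewer than `n - d ≤ k` distinct such swap sums
exist, and greedy choices of swaps show that `v` takes fewer than `3k` values and that some value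
`g` occurs at all but at most `2k - 2` indices.

For `n ≥ 6k²`, `g` then occurs more than `n / 2` times, which forces it to be a unit. After
dividing by `g`, any sum `s` of the remaining entries satisfies `s.val ≤ n - 1 - m`, where `m` is
the multiplicity of `1`: otherwise `n - s.val` ones complete it to `0`. Summing representatives
without wrap-around gives `v = a * u` with `u` a unit, `a i ≥ 1` and `∑ a i ≤ n - 1`. Conversely
each such tuple is zero-sum-free, and `(u, a)` is unique since two such `a` share an index where
both are `1`. Counting units and the `a` by stars and bars gives `φ n * (n - 1).choose (k - 1)`.
-/

open Finset

theorem ZMod.val_sum_eq_sum_val {n : ℕ} {ι : Type*} [DecidableEq ι] {f : ι → ZMod n}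
    {s : Finset ι} {b : ℕ} (hb : 2 * b < n) (hs : ∀ t ⊆ s, (∑ i ∈ t, f i).val ≤ b) :
    (∑ i ∈ s, f i).val = ∑ i ∈ s, (f i).val := by
  induction s using Finset.induction_on with
  | empty => simp
  | insert a s ha ih =>
    have hsum := hs s (subset_insert a s)
    have ha' : (f a).val ≤ b := by simpa using hs {a} (by simp)
    rw [sum_insert ha, sum_insert ha, ZMod.val_add_of_lt (by omega),
      ih fun t ht => hs t (ht.trans (subset_insert a s))]

theorem List.Nodup.exists_nodup_append_length_eq_card {α : Type*} [Fintype α] [DecidableEq α]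
    {F : List α} (hF : F.Nodup) : ∃ T, (F ++ T).Nodup ∧ (F ++ T).length = Fintype.card α := by
  have hl : (F ++ (univ \ F.toFinset).toList).Nodup := by
    refine List.nodup_append.2 ⟨hF, nodup_toList _, fun a ha b hb hab => ?_⟩
    subst hab
    simp [ha] at hb
  have huniv : (F ++ (univ \ F.toFinset).toList).toFinset = univ :=
    eq_univ_of_forall fun i => by by_cases hi : i ∈ F <;> simp [hi]
  exact ⟨_, hl, by rw [← List.toFinset_card_of_nodup hl, huniv, card_univ]⟩

theorem natCard_sum_le_eq_choose (d m : ℕ) :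
    Nat.card {b : Fin d → ℕ // ∑ i, b i ≤ m} = (d + m).choose m := by
  let e : {b : Fin d → ℕ // ∑ i, b i ≤ m} ≃ {P : Option (Fin d) → ℕ // ∑ o, P o = m} :=
    { toFun b := ⟨fun o => o.elim (m - ∑ i, b.1 i) b.1, by
        rw [Fintype.sum_option]
        exact Nat.sub_add_cancel b.2⟩
      invFun P := ⟨fun i => P.1 (some i), by
        show ∑ i, P.1 (some i) ≤ m
        have := P.2
        rw [Fintype.sum_option] at this
        omega⟩
      left_inv _ := rfl
      right_inv P := by
        ext o
        cases o with
        | none =>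
          have := P.2
          rw [Fintype.sum_option] at this
          show m - ∑ i, P.1 (some i) = P.1 none
          omega
        | some i => rfl }
  rw [Nat.card_congr (e.trans (Sym.equivNatSumOfFintype _ m).symm), Sym.natCard_sym_eq_choose,
    Nat.card_eq_fintype_card, Fintype.card_option, Fintype.card_fin, Nat.add_right_comm,
    Nat.add_sub_cancel]

theorem card_filter_ne_zero_le_sum {ι : Type*} [Fintype ι] (b : ι → ℕ) :
    #{i | b i ≠ 0} ≤ ∑ i, b i :=
  calc #{i | b i ≠ 0} ≤ ∑ i ∈ {i | b i ≠ 0}, b i := by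
        simpa using card_nsmul_le_sum _ b 1 fun i hi =>
          Nat.one_le_iff_ne_zero.2 (mem_filter.1 hi).2
    _ ≤ ∑ i, b i := sum_le_sum_of_subset (subset_univ _)

/-- A prefix sum of `l` after swapping two adjacent entries of different values. -/
def IsSwapSum {n d : ℕ} (v : Fin d → ZMod n) (l : List (Fin d)) (μ : ZMod n) : Prop :=
  ∃ A x y B, l = A ++ x :: y :: B ∧ v x ≠ v y ∧ μ = (A.map v).sum + v y

theorem IsSwapSum.append {n d : ℕ} {v : Fin d → ZMod n} {l : List (Fin d)} {μ : ZMod n}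
    (h : IsSwapSum v l μ) (T : List (Fin d)) : IsSwapSum v (l ++ T) μ := by
  obtain ⟨A, x, y, B, rfl, hxy, rfl⟩ := h
  exact ⟨A, x, y, B ++ T, by simp, hxy, rfl⟩

namespace ZeroSumFree

variable {n d : ℕ} {v : Fin d → ZMod n}

theorem sum_map_append_ne (hv : ZeroSumFree v) {L₁ L₂ : List (Fin d)} (h : (L₁ ++ L₂).Nodup)
    (h₂ : L₂ ≠ []) : ((L₁ ++ L₂).map v).sum ≠ (L₁.map v).sum := by
  have hL₂ := hv L₂.toFinset ((List.toFinset_nonempty_iff L₂).2 h₂)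
  rw [List.sum_toFinset _ ((List.sublist_append_right L₁ L₂).nodup h)] at hL₂
  simpa [List.sum_append] using hL₂

theorem sum_take_ne (hv : ZeroSumFree v) {l : List (Fin d)} (hl : l.Nodup) {i j : ℕ}
    (hij : i < j) (hj : j ≤ l.length) :
    ((l.take i).map v).sum ≠ ((l.take j).map v).sum := by
  obtain ⟨r, hr⟩ := List.take_prefix_take_left (l := l) hij.le
  have hr' : r ≠ [] := by
    rintro rfl
    have := congrArg List.length hr
    simp only [List.append_nil, List.length_take] at this
    omega
  rw [← hr]
  exact (hv.sum_map_append_ne (hr ▸ (List.take_sublist j l).nodup hl) hr').symm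

theorem sum_take_ne_of_isSwapSum (hv : ZeroSumFree v) {l : List (Fin d)} (hl : l.Nodup)
    {μ : ZMod n} (hμ : IsSwapSum v l μ) (j : ℕ) : ((l.take j).map v).sum ≠ μ := by
  obtain ⟨A, x, y, B, rfl, hxy, rfl⟩ := hμ
  have hsub : (A ++ [y]).Sublist (A ++ x :: y :: B) :=
    (List.singleton_sublist.2 (by simp)).append_left A
  have hAy := hsub.nodup hl
  rcases lt_trichotomy j (A.length + 1) with hj | rfl | hj
  · -- the prefix lies inside `A`, hence strictly inside `A ++ [y]`
    have hpre : A ++ [y] = A.take j ++ (A.drop j ++ [y]) := by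
      rw [← List.append_assoc, List.take_append_drop]
    rw [List.take_append_of_le_length (by omega)]
    have := hv.sum_map_append_ne (hpre ▸ hAy) (by simp)
    rw [← hpre] at this
    simpa using this.symm
  · simpa [List.take_append, List.take_of_length_le] using hxy
  · -- up to order, the prefix contains `A ++ [y]` and also `x`
    obtain ⟨m, rfl⟩ : ∃ m, j = A.length + 2 + m := ⟨j - (A.length + 2), by omega⟩
    have hperm : ((A ++ x :: y :: B).take (A.length + 2 + m)).Perm
        ((A ++ [y]) ++ x :: B.take m) := by
      rw [List.take_append, List.take_of_length_le (by omega),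
        show A.length + 2 + m - A.length = m + 2 by omega]
      simpa using (List.Perm.swap y x (B.take m)).append_left A
    have hnd := hperm.nodup_iff.1 ((List.take_sublist _ _).nodup hl)
    rw [(hperm.map v).sum_eq]
    simpa using hv.sum_map_append_ne hnd (by simp)

/-- The `d + 1` prefix sums of an ordering of all indices are distinct, and swap sums avoid
them. -/
theorem add_card_lt [NeZero n] (hv : ZeroSumFree v) {F : List (Fin d)} (hF : F.Nodup)
    {M : Finset (ZMod n)} (hM : ∀ μ ∈ M, IsSwapSum v F μ) : d + #M < n := by
  obtain ⟨T, hl, hlen⟩ := hF.exists_nodup_append_length_eq_card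
  rw [Fintype.card_fin] at hlen
  set l := F ++ T
  set P := (range (d + 1)).image fun j => ((l.take j).map v).sum
  have hP : #P = d + 1 := by
    rw [card_image_of_injOn, card_range]
    intro i hi j hj hij
    simp only [coe_range, Set.mem_Iio] at hi hj
    by_contra hne
    rcases lt_or_gt_of_ne hne with h | h
    · exact hv.sum_take_ne hl h (by omega) hij
    · exact hv.sum_take_ne hl h (by omega) hij.symm
  have hdisj : Disjoint P M := by
    refine disjoint_left.2 fun μ hμP hμM => ?_
    obtain ⟨j, -, rfl⟩ := mem_image.1 hμP
    exact hv.sum_take_ne_of_isSwapSum hl ((hM _ hμM).append T) j rfl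
  calc d + #M < #P + #M := by omega
    _ = #(P ∪ M) := (card_union_of_disjoint hdisj).symm
    _ ≤ n := (card_le_univ _).trans (ZMod.card n).le

theorem add_lt_of_forall_extend [NeZero n] (hv : ZeroSumFree v) {k : ℕ}
    (good : List (Fin d) → Finset (ZMod n) → Prop) (h₀ : good [] ∅)
    (hstep : ∀ F M, F.Nodup → F.length = 2 * #M → #M < k → good F M →
      ∃ x y, x ∉ F ∧ y ∉ F ∧ v x ≠ v y ∧ (F.map v).sum + v y ∉ M ∧
        good (F ++ [x, y]) (insert ((F.map v).sum + v y) M)) :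
    d + k < n := by
  have key : ∀ t ≤ k, ∃ F M, F.Nodup ∧ F.length = 2 * #M ∧ #M = t ∧
      (∀ μ ∈ M, IsSwapSum v F μ) ∧ good F M := by
    intro t
    induction t with
    | zero => exact fun _ => ⟨[], ∅, by simp, by simp, by simp, by simp, h₀⟩
    | succ t ih =>
      intro ht
      obtain ⟨F, M, hF, hlen, rfl, hM, hgood⟩ := ih (by omega)
      obtain ⟨x, y, hx, hy, hxy, hnew, hgood'⟩ := hstep F M hF hlen (by omega) hgood
      refine ⟨F ++ [x, y], _, ?_, ?_, card_insert_of_notMem hnew, ?_, hgood'⟩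
      · refine List.nodup_append.2 ⟨hF, by simpa using fun h : x = y => hxy (congrArg v h), ?_⟩
        rintro a ha b hb rfl
        simp only [List.mem_cons, List.not_mem_nil, or_false] at hb
        rcases hb with rfl | rfl <;> contradiction
      · rw [List.length_append, hlen, card_insert_of_notMem hnew]
        rfl
      · intro μ hμ
        rcases mem_insert.1 hμ with rfl | hμ
        · exact ⟨F, x, y, [], by simp, hxy, rfl⟩
        · exact (hM μ hμ).append _
  obtain ⟨F, M, hF, -, rfl, hM, -⟩ := key k le_rfl
  exact hv.add_card_lt hF hM

theorem card_image_lt [NeZero n] (hv : ZeroSumFree v) {k : ℕ} (hn : n ≤ d + k) :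
    #(univ.image v) < 3 * k := by
  by_contra! hk
  refine (hv.add_lt_of_forall_extend (k := k) (fun _ _ => True) trivial ?_).not_ge hn
  intro F M _ hlen hMk _
  have hvalue : ∀ B : Finset (ZMod n), #B < 3 * k → ∃ i, v i ∉ B := fun B hB => by
    obtain ⟨w, hw, hwB⟩ := exists_mem_notMem_of_card_lt_card (hB.trans_le hk)
    obtain ⟨i, -, rfl⟩ := mem_image.1 hw
    exact ⟨i, hwB⟩
  set V := (F.map v).toFinset
  have hV : #V ≤ 2 * #M := hlen ▸ (List.toFinset_card_le _).trans (by simp)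
  obtain ⟨y, hy⟩ := hvalue (V ∪ M.image (· - (F.map v).sum)) <| by
    grw [card_union_le, card_image_le]; omega
  obtain ⟨x, hx⟩ := hvalue (insert (v y) V) <| by
    grw [card_insert_le]; omega
  simp only [mem_union, mem_image, not_or, not_exists, not_and] at hy
  rw [mem_insert, not_or] at hx
  refine ⟨x, y, fun hxF => hx.2 ?_, fun hyF => hy.1 ?_, hx.1, fun hμ => hy.2 _ hμ (by ring),
    trivial⟩
  · exact List.mem_toFinset.2 (List.mem_map_of_mem hxF)
  · exact List.mem_toFinset.2 (List.mem_map_of_mem hyF)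

theorem card_fiber_compl_lt [NeZero n] (hv : ZeroSumFree v) {k : ℕ} (hn : n ≤ d + k)
    {g : ZMod n} (hg : 2 * k ≤ #{i | v i = g} + 1) : #{i | v i ≠ g} + 1 < 2 * k := by
  by_contra! hR
  refine (hv.add_lt_of_forall_extend (k := k)
    (fun F M => ∀ μ ∈ M, ∃ A B, F = A ++ B ∧ B ≠ [] ∧ μ = (A.map v).sum + g)
    (by simp) ?_).not_ge hn
  intro F M hF hlen hMk hgood
  have hfresh : ∀ s : Finset (Fin d), 2 * k ≤ #s + 1 → ∃ i ∈ s, i ∉ F := fun s hs => by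
    obtain ⟨i, hi, hiF⟩ := exists_mem_notMem_of_card_lt_card (s := F.toFinset) (t := s)
      ((List.toFinset_card_le _).trans_lt (by omega))
    exact ⟨i, hi, by simpa using hiF⟩
  obtain ⟨x, hx, hxF⟩ := hfresh _ hR
  obtain ⟨y, hy, hyF⟩ := hfresh _ hg
  have hvx : v x ≠ g := (mem_filter.1 hx).2
  have hvy : v y = g := (mem_filter.1 hy).2
  refine ⟨x, y, hxF, hyF, hvy ▸ hvx, ?_, ?_⟩ <;> rw [hvy]
  · intro hμ
    obtain ⟨A, B, rfl, hB, hAB⟩ := hgood _ hμ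
    exact hv.sum_map_append_ne hF hB (add_right_cancel hAB)
  · intro μ hμ
    rcases mem_insert.1 hμ with rfl | hμ
    · exact ⟨F, [x, y], rfl, by simp, rfl⟩
    · obtain ⟨A, B, rfl, hB, rfl⟩ := hgood μ hμ
      exact ⟨A, B ++ [x, y], by simp, by simp [hB], rfl⟩

theorem sum_add_nsmul_ne_zero (hv : ZeroSumFree v) {g : ZMod n} {S : Finset (Fin d)} {j : ℕ}
    (hS : ∀ i ∈ S, v i ≠ g) (hj : j ≤ #{i | v i = g}) (hne : S.Nonempty ∨ j ≠ 0) :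
    ∑ i ∈ S, v i + j • g ≠ 0 := by
  obtain ⟨J, hJ, rfl⟩ := exists_subset_card_eq hj
  have hJg : ∑ i ∈ J, v i = #J • g := by
    rw [sum_congr rfl fun i hi => (mem_filter.1 (hJ hi)).2, sum_const]
  rw [← hJg, ← sum_union (disjoint_left.2 fun i hiS hiJ => hS i hiS (mem_filter.1 (hJ hiJ)).2)]
  refine hv _ ?_
  rcases hne with hS' | hJ'
  · exact hS'.mono subset_union_left
  · exact (card_pos.1 (Nat.pos_of_ne_zero hJ')).mono subset_union_right

theorem isUnit_of_lt_card_fiber [NeZero n] (hv : ZeroSumFree v) {g : ZMod n}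
    (hg : n < 2 * #{i | v i = g}) : IsUnit g := by
  have hord : #{i | v i = g} < addOrderOf g := by
    by_contra! h
    exact hv.sum_add_nsmul_ne_zero (S := ∅) (by simp) h (Or.inr (addOrderOf_pos g).ne')
      (by rw [sum_empty, zero_add, addOrderOf_nsmul_eq_zero])
  have horder := ZMod.addOrderOf_coe g.val (NeZero.ne n)
  rw [ZMod.natCast_zmod_val] at horder
  rw [horder] at hord
  rw [← ZMod.natCast_zmod_val g, ZMod.isUnit_iff_coprime, Nat.coprime_comm]
  by_contra hcop
  have h2 : 2 ≤ n.gcd g.val := by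
    have := Nat.gcd_pos_of_pos_left g.val (Nat.pos_of_ne_zero (NeZero.ne n))
    unfold Nat.Coprime at hcop
    omega
  have := Nat.div_le_div_left h2 two_pos (a := n)
  omega

theorem sum_val_le (hv : ZeroSumFree v) (hm : 2 * (n - 1 - #{i | v i = 1}) < n) :
    ∑ i, (v i).val ≤ n - 1 := by
  have : NeZero n := ⟨by omega⟩
  set O : Finset (Fin d) := {i | v i = 1}
  have hO : #O < n := by
    by_contra! h
    exact hv.sum_add_nsmul_ne_zero (S := ∅) (by simp) h (Or.inr (by omega))
      (by simp)
  -- otherwise `n - (∑ i ∈ S, v i).val` ones complete the sum to `0`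
  have hcol : ∀ S ⊆ Oᶜ, (∑ i ∈ S, v i).val ≤ n - 1 - #O := by
    intro S hS
    by_contra! h
    have hx := ZMod.val_lt (∑ i ∈ S, v i)
    refine hv.sum_add_nsmul_ne_zero (g := 1) (j := n - (∑ i ∈ S, v i).val)
      (fun i hi => by simpa [O] using hS hi) (show _ ≤ #O by omega) (Or.inr (by omega)) ?_
    rw [nsmul_eq_mul, mul_one, Nat.cast_sub hx.le, ZMod.natCast_self, ZMod.natCast_zmod_val]
    ring
  calc ∑ i, (v i).val = ∑ i ∈ O, (v i).val + ∑ i ∈ Oᶜ, (v i).val := (sum_add_sum_compl O _).symm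
    _ ≤ #O • 1 + (n - 1 - #O) := by
      gcongr
      · refine sum_le_card_nsmul _ _ _ fun i hi => ?_
        rw [(mem_filter.1 hi).2, ZMod.val_one_eq_one_mod]
        exact Nat.mod_le 1 n
      · rw [← ZMod.val_sum_eq_sum_val hm hcol]
        exact hcol _ subset_rfl
    _ = n - 1 := by rw [smul_eq_mul, mul_one]; omega

theorem mul_unit (hv : ZeroSumFree v) (u : (ZMod n)ˣ) :
    ZeroSumFree fun i => v i * (u : ZMod n) := by
  intro S hS h
  rw [← sum_mul, Units.mul_left_eq_zero] at h
  exact hv S hS h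

theorem of_natCast {a : Fin d → ℕ} (ha : ∀ i, 1 ≤ a i) (hsum : ∑ i, a i ≤ n - 1) :
    ZeroSumFree fun i => (a i : ZMod n) := by
  intro S hS h
  rw [← Nat.cast_sum, ZMod.natCast_eq_zero_iff] at h
  have hpos : 0 < ∑ i ∈ S, a i :=
    (card_pos.2 hS).trans_le (by simpa using card_nsmul_le_sum S a 1 fun i _ => ha i)
  have hle : ∑ i ∈ S, a i ≤ ∑ i, a i := sum_le_sum_of_subset (subset_univ S)
  have := Nat.le_of_dvd hpos h
  omega

/-- Savchev–Chen form of a long zero-sum-free tuple. -/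
theorem exists_eq_mul_unit [NeZero n] (hv : ZeroSumFree v) {k : ℕ} (hn : n ≤ d + k)
    (hbig : 6 * k ^ 2 ≤ n) :
    ∃ (u : (ZMod n)ˣ) (a : Fin d → ℕ), (∀ i, 1 ≤ a i) ∧ ∑ i, a i ≤ n - 1 ∧
      ∀ i, v i = a i * u := by
  have h6k : 6 * k ≤ n := by nlinarith [Nat.le_self_pow two_ne_zero k]
  obtain ⟨g, -, hg⟩ : ∃ g ∈ univ.image v, 2 * k - 2 < #{i | v i = g} := by
    refine exists_lt_card_fiber_of_mul_lt_card_of_maps_to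
      (fun i _ => mem_image_of_mem v (mem_univ i)) ?_
    have := hv.card_image_lt hn
    rw [card_univ, Fintype.card_fin]
    rcases k with _ | k
    · simpa using (NeZero.pos n).trans_le hn
    · calc #(univ.image v) * (2 * (k + 1) - 2) ≤ (3 * k + 2) * (2 * k) :=
            Nat.mul_le_mul (by omega) (by omega)
        _ < d := by nlinarith
  have hR := hv.card_fiber_compl_lt hn (g := g) (by omega)
  have hOR : #{i | v i = g} + #{i | v i ≠ g} = d := by
    rw [card_filter_add_card_filter_not, card_univ, Fintype.card_fin]
  obtain ⟨u, rfl⟩ := hv.isUnit_of_lt_card_fiber (g := g) (by omega)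
  set w : Fin d → ZMod n := fun i => v i * ↑u⁻¹
  have hw : ZeroSumFree w := hv.mul_unit u⁻¹
  have hfiber : #{i | w i = 1} = #{i | v i = ↑u} := by
    congr 1
    ext i
    simp [w, Units.mul_inv_eq_one]
  refine ⟨u, fun i => (w i).val, fun i => ?_, hw.sum_val_le (by omega), fun i => ?_⟩
  · rw [Nat.one_le_iff_ne_zero, ZMod.val_ne_zero]
    simpa using hw {i} (singleton_nonempty i)
  · simp [w, mul_assoc]

end ZeroSumFree

theorem eq_and_eq_of_natCast_add_one_mul_eq {n d m : ℕ} {u u' : (ZMod n)ˣ} {b b' : Fin d → ℕ}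
    (hb : ∑ i, b i ≤ m) (hb' : ∑ i, b' i ≤ m) (hd : 2 * m < d) (hn : m + 1 < n)
    (h : ∀ i, ((b i + 1 : ℕ) : ZMod n) * u = ((b' i + 1 : ℕ) : ZMod n) * u') :
    u = u' ∧ b = b' := by
  -- `b` and `b'` vanish off at most `m` indices each, so at some index `1 * u = 1 * u'`
  have hcard : #(({i | b i ≠ 0} : Finset (Fin d)) ∪ ({i | b' i ≠ 0} : Finset (Fin d))) <
      #(univ : Finset (Fin d)) := by
    rw [card_univ, Fintype.card_fin]
    grw [card_union_le, card_filter_ne_zero_le_sum, card_filter_ne_zero_le_sum]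
    omega
  obtain ⟨i₀, -, hi₀⟩ := exists_mem_notMem_of_card_lt_card hcard
  simp only [mem_union, mem_filter, mem_univ, true_and, not_or, not_not] at hi₀
  obtain rfl : u = u' := Units.ext (by simpa [hi₀.1, hi₀.2] using h i₀)
  refine ⟨rfl, funext fun i => ?_⟩
  have hlt : ∀ c : Fin d → ℕ, ∑ j, c j ≤ m → c i + 1 < n := fun c hc => by
    have := (single_le_sum (fun j _ => Nat.zero_le (c j)) (mem_univ i)).trans hc
    omega
  have := (ZMod.natCast_eq_natCast_iff' _ _ n).1 ((Units.mul_left_inj u).1 (h i))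
  rw [Nat.mod_eq_of_lt (hlt b hb), Nat.mod_eq_of_lt (hlt b' hb')] at this
  omega

theorem alphaZSF_eq {n d k : ℕ} (hk : 1 ≤ k) (hn : d + k = n) (hbig : 6 * k ^ 2 ≤ n) :
    alphaZSF n d = Nat.totient n * (n - 1).choose (k - 1) := by
  have : NeZero n := ⟨by omega⟩
  have h6k : 6 * k ≤ n := by nlinarith [Nat.le_self_pow two_ne_zero k]
  let Φ : (ZMod n)ˣ × {b : Fin d → ℕ // ∑ i, b i ≤ k - 1} → {v : Fin d → ZMod n // ZeroSumFree v} :=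
    fun p => ⟨fun i => ((p.2.1 i + 1 : ℕ) : ZMod n) * p.1,
      (ZeroSumFree.of_natCast (a := fun i => p.2.1 i + 1) (fun i => by omega) (by
        rw [sum_add_distrib, sum_const, card_univ, Fintype.card_fin, smul_eq_mul, mul_one]
        have := p.2.2
        omega)).mul_unit p.1⟩
  have hΦ : Function.Bijective Φ := by
    refine ⟨fun ⟨u, b⟩ ⟨u', b'⟩ h => ?_, fun ⟨v, hv⟩ => ?_⟩
    · obtain ⟨rfl, hbb'⟩ := eq_and_eq_of_natCast_add_one_mul_eq b.2 b'.2 (by omega) (by omega)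
        fun i => congrFun (congrArg Subtype.val h) i
      rw [Subtype.ext hbb']
    · obtain ⟨u, a, ha, hsum, hva⟩ := hv.exists_eq_mul_unit (k := k) (by omega) hbig
      refine ⟨(u, ⟨fun i => a i - 1, ?_⟩), Subtype.ext (funext fun i => ?_)⟩
      · show ∑ i, (a i - 1) ≤ k - 1
        rw [sum_tsub_distrib _ fun i _ => ha i, sum_const, card_univ, Fintype.card_fin,
          smul_eq_mul, mul_one]
        omega
      · show ((a i - 1 + 1 : ℕ) : ZMod n) * u = v i
        rw [Nat.sub_add_cancel (ha i), hva i]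
  rw [alphaZSF, ← Nat.card_congr (Equiv.ofBijective Φ hΦ), Nat.card_prod,
    natCard_sum_le_eq_choose, Nat.card_eq_fintype_card, ZMod.card_units_eq_totient]
  congr 2
  omega

theorem alpha_n_sub_k_eventually (k : ℕ) (hk : 1 ≤ k) :
    ∃ N : ℕ, ∀ n : ℕ, N ≤ n → 1 ≤ n - k →
      alphaZSF n (n - k) = Nat.totient n * (n - 1).choose (k - 1) := by
  refine ⟨6 * k ^ 2, fun n hn _ => alphaZSF_eq hk (Nat.sub_add_cancel ?_) hn⟩
  nlinarith [Nat.le_self_pow two_ne_zero k]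
end

section
/- For every integer n ≥ 3, α_n^3 = n^3 − 7n^2 + 15n − 10 + (1 + (−1)^{n−1})/2; equivalently, α_n^3 = n^3 − 7n^2 + 15n − 9 when n is odd and α_n^3 = n^3 − 7n^2 + 15n − 10 when n is even. -/
open Finset

lemma zsf_iff {n : ℕ} (v : Fin 3 → ZMod n) :
    ZeroSumFree v ↔ (v 0 ≠ 0 ∧ v 1 ≠ 0 ∧ v 2 ≠ 0 ∧ v 0 + v 1 ≠ 0 ∧
      v 0 + v 2 ≠ 0 ∧ v 1 + v 2 ≠ 0 ∧ v 0 + v 1 + v 2 ≠ 0) := by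
  constructor
  · intro h
    refine ⟨?_, ?_, ?_, ?_, ?_, ?_, ?_⟩
    · simpa using h {0} ⟨0, by simp⟩
    · simpa using h {1} ⟨1, by simp⟩
    · simpa using h {2} ⟨2, by simp⟩
    · simpa [Finset.sum_pair] using h {0, 1} ⟨0, by simp⟩
    · simpa [Finset.sum_pair] using h {0, 2} ⟨0, by simp⟩
    · simpa [Finset.sum_pair] using h {1, 2} ⟨1, by simp⟩
    · have := h {0, 1, 2} ⟨0, by simp⟩
      simpa [Finset.sum_insert, add_assoc] using this
  · rintro ⟨h0, h1, h2, h01, h02, h12, h012⟩ S hS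
    fin_cases S <;> simp_all [Finset.sum_pair, Finset.sum_insert, add_assoc]

theorem inner_count {n : ℕ} [NeZero n] (a b : ZMod n) :
    (univ.filter fun c : ZMod n => a ≠ 0 ∧ b ≠ 0 ∧ c ≠ 0 ∧ a + b ≠ 0 ∧ a + c ≠ 0 ∧
      b + c ≠ 0 ∧ a + b + c ≠ 0).card
    = if a ≠ 0 ∧ b ≠ 0 ∧ a + b ≠ 0 then n - (if a = b then 3 else 4) else 0 := by
  by_cases hQ : a ≠ 0 ∧ b ≠ 0 ∧ a + b ≠ 0
  · obtain ⟨ha, hb, hab⟩ := hQ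
    rw [if_pos ⟨ha, hb, hab⟩]
    have hset : (univ.filter fun c : ZMod n => a ≠ 0 ∧ b ≠ 0 ∧ c ≠ 0 ∧ a + b ≠ 0 ∧ a + c ≠ 0 ∧
      b + c ≠ 0 ∧ a + b + c ≠ 0) = ({0, -a, -b, -(a+b)} : Finset (ZMod n))ᶜ := by
      ext c
      simp only [mem_filter, mem_univ, true_and, mem_compl, mem_insert, mem_singleton]
      constructor
      · rintro ⟨_, _, hc, _, hac, hbc, habc⟩
        push_neg
        refine ⟨hc, fun h => hac (by rw [h]; ring), fun h => hbc (by rw [h]; ring),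
          fun h => habc (by rw [h]; ring)⟩
      · intro h
        push_neg at h
        obtain ⟨h1, h2, h3, h4⟩ := h
        refine ⟨ha, hb, h1, hab, fun h => h2 (by linear_combination h),
          fun h => h3 (by linear_combination h), fun h => h4 (by linear_combination h)⟩
    rw [hset, card_compl, ZMod.card]
    congr 1
    by_cases hab' : a = b
    · subst hab'
      rw [if_pos rfl]
      have h1 : ({0, -a, -a, -(a+a)} : Finset (ZMod n)) = {0, -a, -(a+a)} := by
        ext x; simp
      have h2 : (0 : ZMod n) ∉ ({-a, -(a+a)} : Finset (ZMod n)) := by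
        simp only [mem_insert, mem_singleton]
        push_neg
        exact ⟨fun h => ha (by linear_combination h), fun h => hab (by linear_combination h)⟩
      have h3 : (-a : ZMod n) ∉ ({-(a+a)} : Finset (ZMod n)) := by
        simp only [mem_singleton, neg_inj]
        intro h; exact ha (by linear_combination -h)
      rw [h1, card_insert_of_notMem h2, card_insert_of_notMem h3, card_singleton]
    · rw [if_neg hab']
      have h1 : (0 : ZMod n) ∉ ({-a, -b, -(a+b)} : Finset (ZMod n)) := by
        simp only [mem_insert, mem_singleton]
        push_neg
        exact ⟨fun h => ha (by linear_combination h), fun h => hb (by linear_combination h),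
          fun h => hab (by linear_combination h)⟩
      have h2 : (-a : ZMod n) ∉ ({-b, -(a+b)} : Finset (ZMod n)) := by
        simp only [mem_insert, mem_singleton, neg_inj]
        push_neg
        exact ⟨hab', fun h => hb (by linear_combination -h)⟩
      have h3 : (-b : ZMod n) ∉ ({-(a+b)} : Finset (ZMod n)) := by
        simp only [mem_singleton, neg_inj]
        intro h; exact ha (by linear_combination -h)
      rw [card_insert_of_notMem h1, card_insert_of_notMem h2, card_insert_of_notMem h3,
        card_singleton]
  · rw [if_neg hQ]
    rw [Finset.card_eq_zero, Finset.filter_eq_empty_iff]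
    intro c _
    push_neg at hQ ⊢
    intro ha hb _ hab
    exact absurd (hQ ha hb) (by simp [hab])

lemma four_le {n : ℕ} [NeZero n] {a b : ZMod n} (ha : a ≠ 0) (hb : b ≠ 0)
    (hab : a + b ≠ 0) (hne : a ≠ b) : 4 ≤ n := by
  have h1 : (0 : ZMod n) ∉ ({-a, -b, -(a+b)} : Finset (ZMod n)) := by
    simp only [mem_insert, mem_singleton]
    push_neg
    exact ⟨fun h => ha (by linear_combination h), fun h => hb (by linear_combination h),
      fun h => hab (by linear_combination h)⟩
  have h2 : (-a : ZMod n) ∉ ({-b, -(a+b)} : Finset (ZMod n)) := by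
    simp only [mem_insert, mem_singleton, neg_inj]
    push_neg
    exact ⟨hne, fun h => hb (by linear_combination -h)⟩
  have h3 : (-b : ZMod n) ∉ ({-(a+b)} : Finset (ZMod n)) := by
    simp only [mem_singleton, neg_inj]
    intro h; exact ha (by linear_combination -h)
  have := card_le_univ ({0, -a, -b, -(a+b)} : Finset (ZMod n))
  rw [card_insert_of_notMem h1, card_insert_of_notMem h2, card_insert_of_notMem h3,
    card_singleton, ZMod.card] at this
  omega

lemma inner_count_int {n : ℕ} [NeZero n] (hn : 3 ≤ n) (a b : ZMod n) :
    ((univ.filter fun c : ZMod n => a ≠ 0 ∧ b ≠ 0 ∧ c ≠ 0 ∧ a + b ≠ 0 ∧ a + c ≠ 0 ∧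
      b + c ≠ 0 ∧ a + b + c ≠ 0).card : ℤ)
    = if a ≠ 0 ∧ b ≠ 0 ∧ a + b ≠ 0 then (n : ℤ) - (if a = b then 3 else 4) else 0 := by
  rw [inner_count]
  by_cases hQ : a ≠ 0 ∧ b ≠ 0 ∧ a + b ≠ 0
  · rw [if_pos hQ, if_pos hQ]
    by_cases hab : a = b
    · rw [if_pos hab, if_pos hab]
      have : (3 : ℕ) ≤ n := hn
      push_cast [Nat.cast_sub this]
      ring
    · rw [if_neg hab, if_neg hab]
      have : (4 : ℕ) ≤ n := four_le hQ.1 hQ.2.1 hQ.2.2 hab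
      push_cast [Nat.cast_sub this]
      ring
  · rw [if_neg hQ, if_neg hQ]; rfl

lemma mid_sum {n : ℕ} [NeZero n] (hn : 3 ≤ n) (a : ZMod n) :
    ∑ b : ZMod n, (if a ≠ 0 ∧ b ≠ 0 ∧ a + b ≠ 0 then (n : ℤ) - (if a = b then 3 else 4) else 0)
    = if a = 0 then 0 else (((n : ℤ) - 4) * ((n : ℤ) - 2) + if a + a = 0 then 0 else 1) := by
  by_cases ha : a = 0
  · simp [ha]
  · rw [if_neg ha]
    have hcond : ∀ b : ZMod n, (a ≠ 0 ∧ b ≠ 0 ∧ a + b ≠ 0) ↔ b ∈ (({0, -a} : Finset (ZMod n))ᶜ) := by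
      intro b
      simp only [mem_compl, mem_insert, mem_singleton]
      push_neg
      constructor
      · rintro ⟨-, hb, hab⟩
        exact ⟨hb, fun h => hab (by rw [h]; ring)⟩
      · rintro ⟨hb, hba⟩
        exact ⟨ha, hb, fun h => hba (by linear_combination h)⟩
    have : ∀ b : ZMod n,
        (if a ≠ 0 ∧ b ≠ 0 ∧ a + b ≠ 0 then (n : ℤ) - (if a = b then 3 else 4) else 0)
        = if b ∈ (({0, -a} : Finset (ZMod n))ᶜ) then ((n : ℤ) - 4) + (if a = b then 1 else 0)
          else 0 := by
      intro b
      by_cases hb : b ∈ (({0, -a} : Finset (ZMod n))ᶜ)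
      · rw [if_pos hb, if_pos ((hcond b).mpr hb)]
        split_ifs <;> ring
      · rw [if_neg hb, if_neg (fun h => hb ((hcond b).mp h))]
    rw [Finset.sum_congr rfl fun b _ => this b]
    rw [← Finset.sum_filter, Finset.filter_mem_eq_inter, Finset.univ_inter]
    rw [Finset.sum_add_distrib, Finset.sum_const, Finset.sum_ite_eq]
    have hcard : (({0, -a} : Finset (ZMod n))ᶜ).card = n - 2 := by
      rw [card_compl, ZMod.card, card_insert_of_notMem (by simp [ha, eq_comm]), card_singleton]
    have hmem : a ∈ (({0, -a} : Finset (ZMod n))ᶜ) ↔ a + a ≠ 0 := by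
      simp only [mem_compl, mem_insert, mem_singleton]
      push_neg
      constructor
      · rintro ⟨-, h⟩ hzz
        exact h (by linear_combination hzz)
      · intro h
        exact ⟨ha, fun hh => h (by linear_combination hh)⟩
    rw [hcard]
    have h2n : (2 : ℕ) ≤ n := by omega
    by_cases hz : a + a = 0
    · rw [if_pos hz, if_neg (by rw [hmem]; simpa using hz), nsmul_eq_mul, Nat.cast_sub h2n]
      push_cast
      ring
    · rw [if_neg hz, if_pos (hmem.mpr hz), nsmul_eq_mul, Nat.cast_sub h2n]
      push_cast
      ring

-- number of a with a ≠ 0 and a + a ≠ 0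
lemma D_count {n : ℕ} [NeZero n] (hn : 3 ≤ n) :
    (univ.filter fun a : ZMod n => ¬a = 0 ∧ ¬(a + a = 0)).card
    = if Even n then n - 2 else n - 1 := by
  by_cases he : Even n
  · rw [if_pos he]
    obtain ⟨m, hm⟩ := he
    have hmn : n = 2 * m := by omega
    have hm0 : 0 < m := by omega
    have hmlt : m < n := by omega
    have key : ∀ a : ZMod n, a + a = 0 ↔ a = 0 ∨ a = (m : ZMod n) := by
      intro a
      constructor
      · intro h
        have hv : ((2 * a.val : ℕ) : ZMod n) = 0 := by
          push_cast
          rw [ZMod.natCast_rightInverse a]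
          linear_combination h
        rw [ZMod.natCast_eq_zero_iff] at hv
        obtain ⟨k, hk⟩ := hv
        have hvlt : a.val < n := ZMod.val_lt a
        have hk2 : k ≤ 1 := by nlinarith
        have : a.val = 0 ∨ a.val = m := by interval_cases k <;> omega
        rcases this with h' | h'
        · left
          rw [← ZMod.natCast_rightInverse a, h']; simp
        · right
          rw [← ZMod.natCast_rightInverse a, h']
      · rintro (rfl | rfl)
        · simp
        · have : ((m : ZMod n) + m) = ((2 * m : ℕ) : ZMod n) := by push_cast; ring
          rw [this, ← hmn, ZMod.natCast_self]
    have hset : (univ.filter fun a : ZMod n => ¬a = 0 ∧ ¬(a + a = 0))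
        = ({0, (m : ZMod n)} : Finset (ZMod n))ᶜ := by
      ext a
      simp only [mem_filter, mem_univ, true_and, mem_compl, mem_insert, mem_singleton]
      rw [key a]
      tauto
    rw [hset, card_compl, ZMod.card]
    congr 1
    rw [card_insert_of_notMem (by
      simp only [mem_singleton]
      intro h
      have : (m : ZMod n) = 0 := h.symm
      rw [ZMod.natCast_eq_zero_iff] at this
      have := Nat.le_of_dvd hm0 this
      omega), card_singleton]
  · rw [if_neg he]
    have hodd : Odd n := Nat.odd_iff.mpr (Nat.not_even_iff.mp he)
    have key : ∀ a : ZMod n, a + a = 0 → a = 0 := by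
      intro a h
      have hv : ((2 * a.val : ℕ) : ZMod n) = 0 := by
        push_cast
        rw [ZMod.natCast_rightInverse a]
        linear_combination h
      rw [ZMod.natCast_eq_zero_iff] at hv
      have hvlt : a.val < n := ZMod.val_lt a
      obtain ⟨k, hk⟩ := hv
      obtain ⟨j, hj⟩ := hodd
      have hk2 : k ≤ 1 := by nlinarith
      have : a.val = 0 := by
        rcases Nat.le_one_iff_eq_zero_or_eq_one.mp hk2 with rfl | rfl <;> omega
      rw [← ZMod.natCast_rightInverse a, this]; simp
    have hset : (univ.filter fun a : ZMod n => ¬a = 0 ∧ ¬(a + a = 0))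
        = ({0} : Finset (ZMod n))ᶜ := by
      ext a
      simp only [mem_filter, mem_univ, true_and, mem_compl, mem_singleton]
      constructor
      · tauto
      · intro h
        exact ⟨h, fun hh => h (key a hh)⟩
    rw [hset, card_compl, ZMod.card, card_singleton]

lemma alpha_eq_card {n : ℕ} [NeZero n] :
    alphaZSF n 3 = (univ.filter fun p : ZMod n × ZMod n × ZMod n =>
      p.1 ≠ 0 ∧ p.2.1 ≠ 0 ∧ p.2.2 ≠ 0 ∧ p.1 + p.2.1 ≠ 0 ∧ p.1 + p.2.2 ≠ 0 ∧
      p.2.1 + p.2.2 ≠ 0 ∧ p.1 + p.2.1 + p.2.2 ≠ 0).card := by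
  have e : {v : Fin 3 → ZMod n // ZeroSumFree v} ≃
      {p : ZMod n × ZMod n × ZMod n // p.1 ≠ 0 ∧ p.2.1 ≠ 0 ∧ p.2.2 ≠ 0 ∧ p.1 + p.2.1 ≠ 0 ∧
        p.1 + p.2.2 ≠ 0 ∧ p.2.1 + p.2.2 ≠ 0 ∧ p.1 + p.2.1 + p.2.2 ≠ 0} :=
    Equiv.subtypeEquiv
      ⟨fun v => (v 0, v 1, v 2), fun p => ![p.1, p.2.1, p.2.2],
       fun v => by funext i; fin_cases i <;> rfl, fun p => rfl⟩
      (fun v => by rw [zsf_iff]; exact Iff.rfl)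
  rw [alphaZSF, Nat.card_congr e, Nat.card_eq_fintype_card, Fintype.card_subtype]

theorem alpha_three_formula (n : ℕ) (hn : 3 ≤ n) :
    (Odd n → (alphaZSF n 3 : ℤ) = (n : ℤ) ^ 3 - 7 * (n : ℤ) ^ 2 + 15 * (n : ℤ) - 9) ∧
    (Even n → (alphaZSF n 3 : ℤ) = (n : ℤ) ^ 3 - 7 * (n : ℤ) ^ 2 + 15 * (n : ℤ) - 10) := by
  have : NeZero n := ⟨by omega⟩
  have key : (alphaZSF n 3 : ℤ)
      = ((n : ℤ) - 1) * (((n : ℤ) - 4) * ((n : ℤ) - 2))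
        + ((univ.filter fun a : ZMod n => ¬a = 0 ∧ ¬(a + a = 0)).card : ℤ) := by
    rw [alpha_eq_card]
    rw [Finset.card_filter]
    push_cast
    rw [Fintype.sum_prod_type]
    have step1 : ∀ a : ZMod n, ∑ p : ZMod n × ZMod n,
        (if a ≠ 0 ∧ p.1 ≠ 0 ∧ p.2 ≠ 0 ∧ a + p.1 ≠ 0 ∧ a + p.2 ≠ 0 ∧ p.1 + p.2 ≠ 0 ∧
          a + p.1 + p.2 ≠ 0 then (1 : ℤ) else 0)
        = if a = 0 then 0 else (((n : ℤ) - 4) * ((n : ℤ) - 2) + if a + a = 0 then 0 else 1) := by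
      intro a
      rw [Fintype.sum_prod_type]
      rw [← mid_sum hn a]
      refine Finset.sum_congr rfl fun b _ => ?_
      rw [← inner_count_int hn a b, Finset.card_filter]
      push_cast
      rfl
    calc ∑ a : ZMod n, ∑ p : ZMod n × ZMod n,
        (if a ≠ 0 ∧ p.1 ≠ 0 ∧ p.2 ≠ 0 ∧ a + p.1 ≠ 0 ∧ a + p.2 ≠ 0 ∧ p.1 + p.2 ≠ 0 ∧
          a + p.1 + p.2 ≠ 0 then (1 : ℤ) else 0)
        = ∑ a : ZMod n, (if a = 0 then 0
            else (((n : ℤ) - 4) * ((n : ℤ) - 2) + if a + a = 0 then 0 else 1)) :=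
          Finset.sum_congr rfl fun a _ => step1 a
      _ = ∑ a : ZMod n, ((if a = 0 then 0 else ((n : ℤ) - 4) * ((n : ℤ) - 2))
            + (if ¬a = 0 ∧ ¬(a + a = 0) then 1 else 0)) := by
          refine Finset.sum_congr rfl fun a _ => ?_
          by_cases h1 : a = 0
          · simp [h1]
          · by_cases h2 : a + a = 0 <;> simp [h1, h2]
      _ = ((n : ℤ) - 1) * (((n : ℤ) - 4) * ((n : ℤ) - 2))
            + ((univ.filter fun a : ZMod n => ¬a = 0 ∧ ¬(a + a = 0)).card : ℤ) := by
          rw [Finset.sum_add_distrib, Finset.sum_boole]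
          congr 1
          have hsp : ∀ a : ZMod n, (if a = 0 then (0 : ℤ)
              else ((n : ℤ) - 4) * ((n : ℤ) - 2))
              = ((n : ℤ) - 4) * ((n : ℤ) - 2)
                - (if a = 0 then ((n : ℤ) - 4) * ((n : ℤ) - 2) else 0) := by
            intro a; split_ifs <;> ring
          rw [Finset.sum_congr rfl fun a _ => hsp a, Finset.sum_sub_distrib,
            Finset.sum_const, Finset.sum_ite_eq' univ (0 : ZMod n)
              (fun _ => ((n : ℤ) - 4) * ((n : ℤ) - 2)), if_pos (mem_univ _),
            card_univ, ZMod.card, nsmul_eq_mul]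
          ring
  constructor
  · intro hodd
    have heven : ¬ Even n := Nat.not_even_iff_odd.mpr hodd
    rw [key, D_count hn, if_neg heven]
    have : ((n - 1 : ℕ) : ℤ) = (n : ℤ) - 1 := by
      push_cast [Nat.cast_sub (by omega : 1 ≤ n)]; ring
    rw [this]
    ring
  · intro he
    rw [key, D_count hn, if_pos he]
    have : ((n - 2 : ℕ) : ℤ) = (n : ℤ) - 2 := by
      push_cast [Nat.cast_sub (by omega : 2 ≤ n)]; ring
    rw [this]
    ring
end

section
/- For every positive integer d there exists a monic polynomial f of degree d with integer coefficients such that α_n^d = f(n) for every positive integer n with gcd(n, ⌈d^{d/2}⌉!) = 1. In particular, α_p^d = f(p) for all sufficiently large primes p. -/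
/-!
Inclusion–exclusion over the nonempty subsets of `{1, …, d}` writes `α_n^d` as
`∑_T (-1)^|T| N_T(n)`, where `T` runs over families of nonempty subsets and `N_T(n)` counts the
solutions in `(ℤ/nℤ)^d` of the 0/1 linear system `∑_{i ∈ S} v_i = 0` (`S ∈ T`).

Let `r` be the largest size of a nonvanishing minor of the integer incidence matrix of `T`. If
that minor is invertible mod `n`, a Schur complement argument shows that its `r` rows generate
all rows mod `n`, and these rows define a surjection `(ℤ/nℤ)^d → (ℤ/nℤ)^r`; hence
`N_T(n) = n^(d - r)`. By Hadamard's inequality every minor of a 0/1 matrix with at most `d`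
columns is at most `d^(d/2)` in absolute value, so all of them are invertible mod `n` once `n` is
coprime to `⌈d^(d/2)⌉!`. The resulting polynomial `∑_T (-1)^|T| X^(d - r_T)` is monic of
degree `d`: only `T = ∅` has `r_T = 0`.
-/

open Finset Matrix Polynomial

theorem Real.prod_le_pow_sum_div_card {ι : Type*} [Fintype ι] (z : ι → ℝ)
    (hz : ∀ i, 0 ≤ z i) :
    ∏ i, z i ≤ ((∑ i, z i) / Fintype.card ι) ^ Fintype.card ι := by
  rcases isEmpty_or_nonempty ι with hι | hι
  · simp
  set k := Fintype.card ι
  have hk : (k : ℝ) ≠ 0 := by positivity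
  have hP : 0 ≤ ∏ i, z i := prod_nonneg fun i _ => hz i
  have amgm := Real.geom_mean_le_arith_mean_weighted univ (fun _ => (k : ℝ)⁻¹) z
    (fun _ _ => by positivity) (by simp [k, hk]) (fun i _ => hz i)
  rw [Real.finsetProd_rpow _ _ fun i _ => hz i, ← mul_sum, inv_mul_eq_div] at amgm
  calc ∏ i, z i = ((∏ i, z i) ^ (k : ℝ)⁻¹) ^ k := by
        rw [← Real.rpow_natCast, ← Real.rpow_mul hP, inv_mul_cancel₀ hk, Real.rpow_one]
    _ ≤ ((∑ i, z i) / k) ^ k := by gcongr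

theorem ZMod.isUnit_intCast_of_natAbs_le {n N : ℕ} (hn : n.Coprime N.factorial) {z : ℤ}
    (hz : z ≠ 0) (hzN : z.natAbs ≤ N) : IsUnit (z : ZMod n) := by
  have hcop : z.natAbs.Coprime n :=
    (hn.coprime_dvd_right (Nat.dvd_factorial (Int.natAbs_pos.2 hz) hzN)).symm
  have hunit := (ZMod.isUnit_iff_coprime _ _).2 hcop
  rcases Int.natAbs_eq z with h | h
  · rw [h, Int.cast_natCast]; exact hunit
  · rw [h, Int.cast_neg, Int.cast_natCast]; exact hunit.neg

namespace Matrix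

/-- Hadamard's bound, through AM–GM for the eigenvalues of `Cᵀ C`, whose trace is at most
`(card ι)²`. -/
theorem det_sq_le_card_pow_card_of_abs_le_one {ι : Type*} [Fintype ι] [DecidableEq ι]
    (C : Matrix ι ι ℝ) (hC : ∀ i j, |C i j| ≤ 1) :
    C.det ^ 2 ≤ (Fintype.card ι : ℝ) ^ Fintype.card ι := by
  set k := Fintype.card ι
  have hG : (Cᵀ * C).PosSemidef := by
    simpa using posSemidef_conjTranspose_mul_self C
  have hdiag : ∀ i, (Cᵀ * C) i i ≤ k := fun i =>
    calc (Cᵀ * C) i i = ∑ j, C j i ^ 2 := by simp [mul_apply, sq]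
      _ ≤ ∑ _j : ι, (1 : ℝ) := sum_le_sum fun j _ => by
          simpa [sq_abs] using pow_le_pow_left₀ (abs_nonneg _) (hC j i) 2
      _ = k := by simp [k]
  have htrace : ∑ i, hG.1.eigenvalues i ≤ k * k := by
    have := hG.1.trace_eq_sum_eigenvalues
    simp only [RCLike.ofReal_real_eq_id, id] at this
    rw [← this, trace]
    simpa [k] using sum_le_sum fun i (_ : i ∈ univ) => hdiag i
  calc C.det ^ 2 = ∏ i, hG.1.eigenvalues i := by
        simpa [sq] using hG.1.det_eq_prod_eigenvalues
    _ ≤ ((∑ i, hG.1.eigenvalues i) / k) ^ k :=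
        Real.prod_le_pow_sum_div_card _ hG.eigenvalues_nonneg
    _ ≤ (k : ℝ) ^ k := by
        rcases Nat.eq_zero_or_pos k with hk | hk
        · simp [hk]
        gcongr
        · exact div_nonneg (sum_nonneg fun i _ => hG.eigenvalues_nonneg i) (by positivity)
        · rw [div_le_iff₀ (by positivity)]; exact htrace

theorem natAbs_det_le_ceil_rpow {k d : ℕ} (hk : k ≤ d) (B : Matrix (Fin k) (Fin k) ℤ)
    (hB : ∀ i j, |B i j| ≤ 1) : B.det.natAbs ≤ ⌈(d : ℝ) ^ ((d : ℝ) / 2)⌉₊ := by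
  have hsq : (B.det : ℝ) ^ 2 ≤ ((d : ℝ) ^ ((d : ℝ) / 2)) ^ 2 :=
    calc (B.det : ℝ) ^ 2 ≤ (k : ℝ) ^ k := by
          simpa [Int.cast_det] using det_sq_le_card_pow_card_of_abs_le_one (B.map (↑))
            fun i j => by simpa using (show |(B i j : ℝ)| ≤ 1 by exact_mod_cast hB i j)
      _ ≤ (d : ℝ) ^ d := by
          norm_cast
          rcases d.eq_zero_or_pos with rfl | hd
          · simp [Nat.le_zero.1 hk]
          · exact (Nat.pow_le_pow_left hk k).trans (Nat.pow_le_pow_right hd hk)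
      _ = ((d : ℝ) ^ ((d : ℝ) / 2)) ^ 2 := by
          rw [← Real.rpow_natCast _ 2, ← Real.rpow_mul (Nat.cast_nonneg d)]
          norm_num
  have habs : (B.det.natAbs : ℝ) ≤ (d : ℝ) ^ ((d : ℝ) / 2) := by
    rw [Nat.cast_natAbs, Int.cast_abs]
    exact abs_le_of_sq_le_sq hsq (by positivity)
  exact Nat.cast_le.1 (habs.trans (Nat.le_ceil _))

section minorRank

variable {R : Type*} [CommRing R] {m n : Type*}

def HasNonzeroMinor (A : Matrix m n R) (k : ℕ) : Prop :=
  ∃ (ρ : Fin k → m) (σ : Fin k → n), (A.submatrix ρ σ).det ≠ 0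

open Classical in
noncomputable def minorRank [Fintype n] (A : Matrix m n R) : ℕ :=
  Nat.findGreatest A.HasNonzeroMinor (Fintype.card n)

def bordered {r : ℕ} (A : Matrix m n R) (ρ : Fin r → m) (σ : Fin r → n) (i : m) (j : n) :
    Matrix (Fin r ⊕ Fin 1) (Fin r ⊕ Fin 1) R :=
  A.submatrix (Sum.elim ρ fun _ => i) (Sum.elim σ fun _ => j)

theorem injective_of_det_submatrix_ne_zero {A : Matrix m n R} {k : ℕ} {ρ : Fin k → m}
    {σ : Fin k → n} (h : (A.submatrix ρ σ).det ≠ 0) :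
    Function.Injective ρ ∧ Function.Injective σ := by
  refine ⟨fun a b hab => ?_, fun a b hab => ?_⟩ <;> by_contra hne <;> apply h
  · exact det_zero_of_row_eq hne (by ext; simp [hab])
  · exact det_zero_of_column_eq hne (by simp [hab])

theorem HasNonzeroMinor.le_card_rows [Fintype m] {A : Matrix m n R} {k : ℕ}
    (h : A.HasNonzeroMinor k) : k ≤ Fintype.card m := by
  obtain ⟨ρ, σ, hdet⟩ := h
  simpa using Fintype.card_le_of_injective ρ (injective_of_det_submatrix_ne_zero hdet).1

theorem HasNonzeroMinor.le_card_cols [Fintype n] {A : Matrix m n R} {k : ℕ}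
    (h : A.HasNonzeroMinor k) : k ≤ Fintype.card n := by
  obtain ⟨ρ, σ, hdet⟩ := h
  simpa using Fintype.card_le_of_injective σ (injective_of_det_submatrix_ne_zero hdet).2

theorem hasNonzeroMinor_minorRank [Fintype n] [Nontrivial R] (A : Matrix m n R) :
    A.HasNonzeroMinor A.minorRank := by
  classical
  exact Nat.findGreatest_spec (P := A.HasNonzeroMinor) (Nat.zero_le _)
    ⟨Fin.elim0, Fin.elim0, by simp⟩

theorem minorRank_le_card_rows [Fintype m] [Fintype n] [Nontrivial R] (A : Matrix m n R) :
    A.minorRank ≤ Fintype.card m :=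
  A.hasNonzeroMinor_minorRank.le_card_rows

theorem minorRank_le_card_cols [Fintype n] [Nontrivial R] (A : Matrix m n R) :
    A.minorRank ≤ Fintype.card n :=
  A.hasNonzeroMinor_minorRank.le_card_cols

theorem one_le_minorRank [Fintype n] {A : Matrix m n R} {i : m} {j : n} (h : A i j ≠ 0) :
    1 ≤ A.minorRank := by
  classical
  refine Nat.le_findGreatest (Fintype.card_pos_iff.2 ⟨j⟩) ⟨fun _ => i, fun _ => j, ?_⟩
  simpa [det_unique] using h

theorem not_hasNonzeroMinor_of_minorRank_lt [Fintype n] {A : Matrix m n R} {k : ℕ}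
    (hk : A.minorRank < k) : ¬ A.HasNonzeroMinor k := fun h => by
  classical
  exact Nat.findGreatest_is_greatest hk h.le_card_cols h

theorem det_bordered_minorRank_eq_zero [Fintype n] (A : Matrix m n R)
    (ρ : Fin A.minorRank → m) (σ : Fin A.minorRank → n) (i : m) (j : n) :
    (A.bordered ρ σ i j).det = 0 := by
  by_contra h
  refine not_hasNonzeroMinor_of_minorRank_lt (Nat.lt_add_one A.minorRank)
    ⟨Sum.elim ρ (fun _ : Fin 1 => i) ∘ ⇑finSumFinEquiv.symm,
      Sum.elim σ (fun _ : Fin 1 => j) ∘ ⇑finSumFinEquiv.symm, ?_⟩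
  rwa [← submatrix_submatrix, det_submatrix_equiv_self]

theorem bordered_map {S : Type*} [CommRing S] {r : ℕ} (φ : R →+* S) (A : Matrix m n R)
    (ρ : Fin r → m) (σ : Fin r → n) (i : m) (j : n) :
    (A.map φ).bordered ρ σ i j = φ.mapMatrix (A.bordered ρ σ i j) :=
  rfl

end minorRank

section kernel

variable {S : Type*} [CommRing S] {m n : Type*}

/-- The Schur complement of the invertible minor in `A.bordered ρ σ i j` is the `1 × 1` matrix
`A i j - (A i ∘ σ) ⅟B (A (ρ ·) j)`, whose vanishing for all `j` is the claim. -/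
theorem row_eq_vecMul_of_det_bordered_eq_zero {r : ℕ} (A : Matrix m n S) (ρ : Fin r → m)
    (σ : Fin r → n) [Invertible (A.submatrix ρ σ)] (i : m)
    (h : ∀ j, (A.bordered ρ σ i j).det = 0) :
    A i = ((A i ∘ σ) ᵥ* ⅟(A.submatrix ρ σ)) ᵥ* A.submatrix ρ id := by
  funext j
  have hblocks : A.bordered ρ σ i j =
      fromBlocks (A.submatrix ρ σ) (of fun k (_ : Fin 1) => A (ρ k) j)
        (of fun (_ : Fin 1) k => A i (σ k)) (of fun _ _ => A i j) := by
    ext (_ | _) (_ | _) <;> rfl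
  have hschur := h j
  rw [hblocks, det_fromBlocks₁₁, IsUnit.mul_right_eq_zero (isUnit_det_of_invertible _),
    det_unique, sub_apply, sub_eq_zero] at hschur
  simpa [mul_apply, vecMul, dotProduct, Finset.sum_mul, mul_assoc] using hschur

theorem mulVec_eq_zero_iff_of_det_bordered_eq_zero [Fintype n] {r : ℕ} (A : Matrix m n S)
    (ρ : Fin r → m) (σ : Fin r → n) [Invertible (A.submatrix ρ σ)]
    (h : ∀ i j, (A.bordered ρ σ i j).det = 0) (v : n → S) :
    A *ᵥ v = 0 ↔ A.submatrix ρ id *ᵥ v = 0 := by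
  refine ⟨fun hv => funext fun k => congrFun hv (ρ k), fun hv => funext fun i => ?_⟩
  rw [mulVec, row_eq_vecMul_of_det_bordered_eq_zero A ρ σ i (h i), ← dotProduct_mulVec, hv,
    dotProduct_zero, Pi.zero_apply]

theorem mulVec_surjective_of_isUnit_det_submatrix [Fintype m] [DecidableEq m] [Fintype n]
    (M : Matrix m n S) (σ : m → n) (h : IsUnit (M.submatrix id σ).det) :
    Function.Surjective M.mulVec := by
  classical
  intro y
  have hsub : M * (1 : Matrix n n S).submatrix id σ = M.submatrix id σ := by
    ext i k
    simp [mul_apply, one_apply]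
  refine ⟨(1 : Matrix n n S).submatrix id σ *ᵥ ((M.submatrix id σ)⁻¹ *ᵥ y), ?_⟩
  rw [mulVec_mulVec, hsub, mulVec_mulVec, mul_nonsing_inv _ h, one_mulVec]

theorem card_ker_mulVec_mul_card_pow [Fintype m] [Fintype n] [Finite S] (M : Matrix m n S)
    (h : Function.Surjective M.mulVec) :
    Nat.card {v : n → S // M *ᵥ v = 0} * Nat.card S ^ Fintype.card m =
      Nat.card S ^ Fintype.card n := by
  let f : (n → S) →+ (m → S) := M.mulVecLin.toAddMonoidHom
  have hker : Nat.card {v : n → S // M *ᵥ v = 0} = Nat.card f.ker := rfl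
  rw [hker, ← Nat.card_eq_fintype_card, ← Nat.card_eq_fintype_card, ← Nat.card_fun,
    ← Nat.card_fun, ← f.ker.card_mul_index, AddSubgroup.index_ker,
    AddMonoidHom.range_eq_top.2 h, AddSubgroup.card_top]

theorem card_ker_map_eq_pow_sub_minorRank {R : Type*} [CommRing R] [Nontrivial R] [Fintype n]
    [Finite S] (φ : R →+* S) (A : Matrix m n R)
    (hunit : ∀ (k : ℕ) (ρ : Fin k → m) (σ : Fin k → n),
      (A.submatrix ρ σ).det ≠ 0 → IsUnit (φ (A.submatrix ρ σ).det)) :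
    Nat.card {v : n → S // A.map φ *ᵥ v = 0} =
      Nat.card S ^ (Fintype.card n - A.minorRank) := by
  obtain ⟨ρ, σ, hdet⟩ := A.hasNonzeroMinor_minorRank
  have hB : IsUnit ((A.map φ).submatrix ρ σ).det := by
    rw [submatrix_map, ← RingHom.mapMatrix_apply, ← RingHom.map_det]
    exact hunit _ ρ σ hdet
  let := invertibleOfIsUnitDet _ hB
  have hborder : ∀ i j, ((A.map φ).bordered ρ σ i j).det = 0 := fun i j => by
    rw [bordered_map, ← RingHom.map_det, det_bordered_minorRank_eq_zero, map_zero]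
  have hcount := card_ker_mulVec_mul_card_pow _
    (mulVec_surjective_of_isUnit_det_submatrix ((A.map φ).submatrix ρ id) σ hB)
  rw [← Nat.card_congr (Equiv.subtypeEquivRight
    (mulVec_eq_zero_iff_of_det_bordered_eq_zero _ ρ σ hborder)), Fintype.card_fin] at hcount
  refine Nat.eq_of_mul_eq_mul_right (pow_pos (Nat.card_pos (α := S)) A.minorRank) ?_
  rw [hcount, ← pow_add, Nat.sub_add_cancel A.minorRank_le_card_cols]

end kernel

end Matrix

def subsetIncidence {α : Type*} [DecidableEq α] (T : Finset (Finset α)) : Matrix T α ℤ :=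
  of fun S a => if a ∈ (S : Finset α) then 1 else 0

section subsetIncidence

variable {α : Type*} [DecidableEq α]

theorem subsetIncidence_map_mulVec [Fintype α] {R : Type*} [CommRing R]
    (T : Finset (Finset α)) (v : α → R) :
    (subsetIncidence T).map (Int.castRingHom R) *ᵥ v =
      fun S : T => ∑ a ∈ (S : Finset α), v a := by
  funext S
  simp [subsetIncidence, mulVec, dotProduct]

theorem abs_subsetIncidence_le_one (T : Finset (Finset α)) (S : T) (a : α) :
    |subsetIncidence T S a| ≤ 1 := by
  simp only [subsetIncidence, of_apply]
  split_ifs <;> simp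

theorem minorRank_subsetIncidence_empty [Fintype α] :
    (subsetIncidence (∅ : Finset (Finset α))).minorRank = 0 :=
  Nat.le_zero.1 <| by
    simpa using (subsetIncidence (∅ : Finset (Finset α))).minorRank_le_card_rows

theorem minorRank_subsetIncidence_pos [Fintype α] {T : Finset (Finset α)} {S : Finset α}
    (hS : S ∈ T) (hne : S.Nonempty) : 0 < (subsetIncidence T).minorRank := by
  obtain ⟨a, ha⟩ := hne
  exact one_le_minorRank (i := ⟨S, hS⟩) (j := a) (by simp [subsetIncidence, ha])

end subsetIncidence

theorem card_forall_sum_eq_zero {n d : ℕ} [NeZero n]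
    (hn : n.Coprime ⌈(d : ℝ) ^ ((d : ℝ) / 2)⌉₊.factorial) (T : Finset (Finset (Fin d))) :
    Nat.card {v : Fin d → ZMod n // ∀ S ∈ T, ∑ i ∈ S, v i = 0} =
      n ^ (d - (subsetIncidence T).minorRank) := by
  have hunit : ∀ (k : ℕ) (ρ : Fin k → T) (σ : Fin k → Fin d),
      ((subsetIncidence T).submatrix ρ σ).det ≠ 0 →
        IsUnit (Int.castRingHom (ZMod n) ((subsetIncidence T).submatrix ρ σ).det) :=
    fun k ρ σ h => ZMod.isUnit_intCast_of_natAbs_le hn h <|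
      natAbs_det_le_ceil_rpow (by simpa using HasNonzeroMinor.le_card_cols ⟨ρ, σ, h⟩) _
        fun i j => abs_subsetIncidence_le_one T _ _
  calc Nat.card {v : Fin d → ZMod n // ∀ S ∈ T, ∑ i ∈ S, v i = 0}
      = Nat.card {v // (subsetIncidence T).map (Int.castRingHom (ZMod n)) *ᵥ v = 0} :=
        Nat.card_congr <| Equiv.subtypeEquivRight fun v => by
          rw [subsetIncidence_map_mulVec, funext_iff, Subtype.forall]
          rfl
    _ = n ^ (d - (subsetIncidence T).minorRank) := by
        rw [card_ker_map_eq_pow_sub_minorRank _ _ hunit, Nat.card_zmod, Fintype.card_fin]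

theorem alphaZSF_eq_sum (n d : ℕ) [NeZero n] :
    (alphaZSF n d : ℤ) = ∑ T ∈ ({S | S.Nonempty} : Finset (Finset (Fin d))).powerset,
      (-1 : ℤ) ^ #T * Nat.card {v : Fin d → ZMod n // ∀ S ∈ T, ∑ i ∈ S, v i = 0} := by
  classical
  have := inclusion_exclusion_card_inf_compl ({S | S.Nonempty} : Finset (Finset (Fin d)))
    fun S => {v : Fin d → ZMod n | ∑ i ∈ S, v i = 0}
  convert this using 2
  · rw [alphaZSF, Nat.card_eq_fintype_card, Fintype.card_subtype]
    congr 1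
    ext v
    simp only [mem_filter, mem_univ, true_and, mem_inf, mem_compl]
    rfl
  · rw [Nat.card_eq_fintype_card, Fintype.card_subtype]
    congr 3
    ext v
    simp [mem_inf]

noncomputable def zeroSumFreePoly (d : ℕ) : ℤ[X] :=
  ∑ T ∈ ({S | S.Nonempty} : Finset (Finset (Fin d))).powerset,
    C ((-1) ^ #T) * X ^ (d - (subsetIncidence T).minorRank)

theorem alphaZSF_eq_eval_zeroSumFreePoly {n d : ℕ} [NeZero n]
    (hn : n.Coprime ⌈(d : ℝ) ^ ((d : ℝ) / 2)⌉₊.factorial) :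
    (alphaZSF n d : ℤ) = (zeroSumFreePoly d).eval (n : ℤ) := by
  rw [alphaZSF_eq_sum, zeroSumFreePoly, eval_finsetSum]
  refine sum_congr rfl fun T _ => ?_
  rw [card_forall_sum_eq_zero hn]
  simp

theorem degree_zeroSumFreePoly_sub_X_pow_lt (d : ℕ) :
    (zeroSumFreePoly d - X ^ d).degree < (d : WithBot ℕ) := by
  have hempty : (∅ : Finset (Finset (Fin d))) ∈ ({S | S.Nonempty} : Finset _).powerset :=
    empty_mem_powerset _
  rw [zeroSumFreePoly, ← add_sum_erase _ _ hempty, minorRank_subsetIncidence_empty]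
  simp only [card_empty, pow_zero, map_one, one_mul, Nat.sub_zero, add_sub_cancel_left]
  refine (degree_sum_le _ _).trans_lt <| (Finset.sup_lt_iff (WithBot.bot_lt_coe d)).2
    fun T hT => (degree_C_mul_X_pow_le _ _).trans_lt ?_
  obtain ⟨S, hS⟩ := nonempty_iff_ne_empty.2 (ne_of_mem_erase hT)
  have hSne : S.Nonempty := by simpa using mem_powerset.1 (mem_of_mem_erase hT) hS
  have hpos := minorRank_subsetIncidence_pos hS hSne
  have hle : (subsetIncidence T).minorRank ≤ d := by
    simpa using (subsetIncidence T).minorRank_le_card_cols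
  exact WithBot.coe_lt_coe.2 (show d - (subsetIncidence T).minorRank < d by omega)

theorem zeroSumFreePoly_monic (d : ℕ) : (zeroSumFreePoly d).Monic := by
  have h := (monic_X_pow d).add_of_left (q := zeroSumFreePoly d - X ^ d)
    (by rw [degree_X_pow]; exact degree_zeroSumFreePoly_sub_X_pow_lt d)
  rwa [add_sub_cancel] at h

theorem natDegree_zeroSumFreePoly (d : ℕ) : (zeroSumFreePoly d).natDegree = d := by
  rw [← add_sub_cancel (X ^ d) (zeroSumFreePoly d), natDegree_add_eq_left_of_degree_lt]
  · exact natDegree_X_pow d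
  · rw [degree_X_pow]; exact degree_zeroSumFreePoly_sub_X_pow_lt d

theorem alpha_characteristic_polynomial_gcd_general (d : ℕ) :
    ∃ f : Polynomial ℤ, f.Monic ∧ f.natDegree = d ∧
      (∀ n : ℕ, 0 < n → Nat.Coprime n (Nat.factorial ⌈(d : ℝ) ^ ((d : ℝ) / 2)⌉₊) →
        (alphaZSF n d : ℤ) = f.eval (n : ℤ)) ∧
      (∃ N : ℕ, ∀ p : ℕ, Nat.Prime p → N ≤ p → (alphaZSF p d : ℤ) = f.eval (p : ℤ)) := by
  have hcoprime : ∀ n : ℕ, 0 < n → n.Coprime ⌈(d : ℝ) ^ ((d : ℝ) / 2)⌉₊.factorial →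
      (alphaZSF n d : ℤ) = (zeroSumFreePoly d).eval (n : ℤ) := fun n hn hcop =>
    have : NeZero n := ⟨hn.ne'⟩
    alphaZSF_eq_eval_zeroSumFreePoly hcop
  refine ⟨zeroSumFreePoly d, zeroSumFreePoly_monic d, natDegree_zeroSumFreePoly d, hcoprime,
    ⌈(d : ℝ) ^ ((d : ℝ) / 2)⌉₊ + 1, fun p hp hNp => hcoprime p hp.pos ?_⟩
  exact hp.coprime_iff_not_dvd.2 fun hdvd => by
    have := hp.dvd_factorial.1 hdvd
    omega

theorem alpha_characteristic_polynomial_gcd (d : ℕ) (hd : 0 < d) :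
    ∃ f : Polynomial ℤ, f.Monic ∧ f.natDegree = d ∧
      (∀ n : ℕ, 0 < n → Nat.Coprime n (Nat.factorial ⌈(d : ℝ) ^ ((d : ℝ) / 2)⌉₊) →
        (alphaZSF n d : ℤ) = f.eval (n : ℤ)) ∧
      (∃ N : ℕ, ∀ p : ℕ, Nat.Prime p → N ≤ p → (alphaZSF p d : ℤ) = f.eval (p : ℤ)) :=
  alpha_characteristic_polynomial_gcd_general d
end

section
/- For any integers n and d with 1 ≤ d ≤ n−1, we have α_n^d ≥ C(n−1, d) and β_n^d ≥ φ(n)·C(n−2, d−1), where C(a, b) denotes the binomial coefficient. -/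
/-! ### Auxiliary construction -/

/-- The "partial sums" function associated to a strictly increasing `b : Fin d → ℕ`. -/
def Gof (n d : ℕ) (b : Fin d → ℕ) : ℕ → ℕ := fun k =>
  if k = 0 then 0 else if h : k - 1 < d then b ⟨k - 1, h⟩ else n - 1

/-- The tuple of consecutive differences of `Gof n d b`, in `ZMod n`. -/
def vOf (n d : ℕ) (b : Fin d → ℕ) : Fin d → ZMod n :=
  fun i => (Gof n d b ((i : ℕ) + 1) : ZMod n) - (Gof n d b (i : ℕ) : ZMod n)

lemma Gof_zero (n d : ℕ) (b : Fin d → ℕ) : Gof n d b 0 = 0 := by simp [Gof]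

lemma Gof_succ {n d : ℕ} {b : Fin d → ℕ} {k : ℕ} (hk : k < d) :
    Gof n d b (k + 1) = b ⟨k, hk⟩ := by
  simp [Gof, dif_pos hk]

lemma Gof_mono {n d : ℕ} {b : Fin d → ℕ} (hmono : StrictMono b)
    (hbn : ∀ i, b i ≤ n - 1) : Monotone (Gof n d b) := by
  apply monotone_nat_of_le_succ
  intro k
  rcases Nat.eq_zero_or_pos k with rfl | hk
  · exact (Gof_zero n d b) ▸ Nat.zero_le _
  · simp only [Gof, if_neg (by omega : ¬ k = 0), if_neg (by omega : ¬ k + 1 = 0),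
      Nat.add_sub_cancel]
    by_cases h1 : k - 1 < d
    · rw [dif_pos h1]
      by_cases h2 : k < d
      · rw [dif_pos h2]
        exact hmono.monotone (by simp only [Fin.mk_le_mk]; omega)
      · rw [dif_neg h2]; exact hbn _
    · have h2 : ¬ k < d := by omega
      rw [dif_neg h1, dif_neg h2]

lemma Gof_lt_succ {n d : ℕ} {b : Fin d → ℕ} (hb1 : ∀ i, 1 ≤ b i)
    (hmono : StrictMono b) {k : ℕ} (hk : k < d) :
    Gof n d b k < Gof n d b (k + 1) := by
  rw [Gof_succ hk]
  rcases Nat.eq_zero_or_pos k with rfl | hpos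
  · rw [Gof_zero]
    have := hb1 ⟨0, hk⟩
    omega
  · have h1 : k - 1 < d := by omega
    simp only [Gof, if_neg (by omega : ¬ k = 0), dif_pos h1]
    exact hmono (by simp only [Fin.mk_lt_mk]; omega)

lemma Gof_le {n d : ℕ} {b : Fin d → ℕ} (hbn : ∀ i, b i ≤ n - 1) (k : ℕ) :
    Gof n d b k ≤ n - 1 := by
  unfold Gof
  split
  · exact Nat.zero_le _
  · split
    · exact hbn _
    · exact le_rfl

lemma vOf_zsf {n d : ℕ} {b : Fin d → ℕ} (hn : 2 ≤ n) (hb1 : ∀ i, 1 ≤ b i)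
    (hbn : ∀ i, b i ≤ n - 1) (hmono : StrictMono b) :
    ZeroSumFree (vOf n d b) := by
  haveI : NeZero n := ⟨by omega⟩
  intro S hS h0
  set N : ℕ := ∑ i ∈ S, (Gof n d b ((i : ℕ) + 1) - Gof n d b (i : ℕ)) with hN
  have hcast : (N : ZMod n) = ∑ i ∈ S, vOf n d b i := by
    rw [hN, Nat.cast_sum]
    refine Finset.sum_congr rfl fun i _ => ?_
    rw [Nat.cast_sub (Gof_mono hmono hbn (Nat.le_succ _))]
    rfl
  have hpos : 0 < N := by
    obtain ⟨m, hm⟩ := hS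
    have h1 : 0 < Gof n d b ((m : ℕ) + 1) - Gof n d b (m : ℕ) :=
      Nat.sub_pos_of_lt (Gof_lt_succ hb1 hmono m.isLt)
    have h2 : Gof n d b ((m : ℕ) + 1) - Gof n d b (m : ℕ) ≤ N :=
      Finset.single_le_sum (f := fun i : Fin d => Gof n d b ((i : ℕ) + 1) - Gof n d b (i : ℕ))
        (fun i _ => Nat.zero_le _) hm
    omega
  have hlt : N < n := by
    have h1 : N ≤ ∑ i : Fin d, (Gof n d b ((i : ℕ) + 1) - Gof n d b (i : ℕ)) :=
      Finset.sum_le_sum_of_subset (Finset.subset_univ S)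
    rw [Fin.sum_univ_eq_sum_range (fun j => Gof n d b (j + 1) - Gof n d b j) d] at h1
    rw [Finset.sum_range_tsub (Gof_mono hmono hbn)] at h1
    have h2 := Gof_le (n := n) (d := d) (b := b) hbn d
    have h3 := Gof_zero n d b
    omega
  rw [← hcast] at h0
  have hdvd : n ∣ N := (ZMod.natCast_eq_zero_iff N n).mp h0
  have := Nat.le_of_dvd hpos hdvd
  omega

lemma vOf_inj {n d : ℕ} (hn : 2 ≤ n) {b b' : Fin d → ℕ}
    (hbn : ∀ i, b i ≤ n - 1) (hbn' : ∀ i, b' i ≤ n - 1)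
    (h : vOf n d b = vOf n d b') : b = b' := by
  haveI : NeZero n := ⟨by omega⟩
  funext k
  have key : ∀ c : Fin d → ℕ, ((c k : ℕ) : ZMod n) =
      ∑ j ∈ Finset.range ((k : ℕ) + 1),
        ((Gof n d c (j + 1) : ZMod n) - (Gof n d c j : ZMod n)) := by
    intro c
    rw [Finset.sum_range_sub (fun j => (Gof n d c j : ZMod n))]
    rw [Gof_succ k.isLt, Gof_zero]
    simp
  have hsum : ∀ j ∈ Finset.range ((k : ℕ) + 1),
      ((Gof n d b (j + 1) : ZMod n) - (Gof n d b j : ZMod n)) =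
      ((Gof n d b' (j + 1) : ZMod n) - (Gof n d b' j : ZMod n)) := by
    intro j hj
    have hjk : j < (k : ℕ) + 1 := Finset.mem_range.mp hj
    have hjd : j < d := by have := k.isLt; omega
    have := congrFun h ⟨j, hjd⟩
    simpa [vOf] using this
  have hcast : ((b k : ℕ) : ZMod n) = ((b' k : ℕ) : ZMod n) := by
    rw [key b, key b']
    exact Finset.sum_congr rfl hsum
  have h1 := ZMod.val_cast_of_lt (show b k < n by have := hbn k; omega)
  have h2 := ZMod.val_cast_of_lt (show b' k < n by have := hbn' k; omega)
  rw [← h1, ← h2, hcast]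

theorem alpha_beta_lower_bounds (n d : ℕ) (hd1 : 1 ≤ d) (hdn : d ≤ n - 1) :
    (n - 1).choose d ≤ alphaZSF n d ∧
      Nat.totient n * (n - 2).choose (d - 1) ≤ betaZSF n d := by
  have hn : 2 ≤ n := by omega
  haveI : NeZero n := ⟨by omega⟩
  constructor
  · -- alpha bound
    set bfun : {s : Finset (Fin (n - 1)) // s.card = d} → Fin d → ℕ :=
      fun s i => ((s.1.orderEmbOfFin s.2 i : Fin (n - 1)) : ℕ) + 1 with hbfun
    have hb1 : ∀ s i, 1 ≤ bfun s i := fun s i => by simp [hbfun]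
    have hbn : ∀ s i, bfun s i ≤ n - 1 := fun s i => by
      have := (s.1.orderEmbOfFin s.2 i).isLt
      simp only [hbfun]; omega
    have hmono : ∀ s, StrictMono (bfun s) := by
      intro s i j hij
      have := (s.1.orderEmbOfFin s.2).strictMono hij
      simp only [hbfun]
      have : ((s.1.orderEmbOfFin s.2 i : Fin (n - 1)) : ℕ) <
          ((s.1.orderEmbOfFin s.2 j : Fin (n - 1)) : ℕ) := this
      omega
    set F : {s : Finset (Fin (n - 1)) // s.card = d} →
        {v : Fin d → ZMod n // ZeroSumFree v} :=
      fun s => ⟨vOf n d (bfun s), vOf_zsf hn (hb1 s) (hbn s) (hmono s)⟩ with hF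
    have hFinj : Function.Injective F := by
      intro s t hst
      have hv : vOf n d (bfun s) = vOf n d (bfun t) := congrArg Subtype.val hst
      have hb : bfun s = bfun t := vOf_inj hn (hbn s) (hbn t) hv
      have hfun : ⇑(s.1.orderEmbOfFin s.2) = ⇑(t.1.orderEmbOfFin t.2) := by
        funext i
        have := congrFun hb i
        simp only [hbfun] at this
        exact Fin.val_injective (by omega)
      have hrange : (↑s.1 : Set (Fin (n - 1))) = ↑t.1 := by
        rw [← Finset.range_orderEmbOfFin s.1 s.2, ← Finset.range_orderEmbOfFin t.1 t.2,
          hfun]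
      exact Subtype.ext (Finset.coe_injective hrange)
    calc (n - 1).choose d
        = Nat.card {s : Finset (Fin (n - 1)) // s.card = d} := by
          rw [Nat.card_eq_fintype_card, Fintype.card_finset_len, Fintype.card_fin]
      _ ≤ alphaZSF n d := Nat.card_le_card_of_injective F hFinj
  · -- beta bound
    set bfun : {s : Finset (Fin (n - 2)) // s.card = d - 1} → Fin d → ℕ :=
      fun s i => if h : (i : ℕ) = 0 then 1
        else ((s.1.orderEmbOfFin s.2 ⟨(i : ℕ) - 1, by have := i.isLt; omega⟩ :
          Fin (n - 2)) : ℕ) + 2 with hbfun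
    have hb1 : ∀ s i, 1 ≤ bfun s i := by
      intro s i
      simp only [hbfun]
      split <;> omega
    have hbn : ∀ s i, bfun s i ≤ n - 1 := by
      intro s i
      simp only [hbfun]
      split
      · omega
      · have := (s.1.orderEmbOfFin s.2 ⟨(i : ℕ) - 1, by have := i.isLt; omega⟩).isLt
        omega
    have hmono : ∀ s, StrictMono (bfun s) := by
      intro s i j hij
      have hij' : (i : ℕ) < (j : ℕ) := hij
      simp only [hbfun]
      by_cases hi : (i : ℕ) = 0
      · rw [dif_pos hi, dif_neg (by omega : ¬ (j : ℕ) = 0)]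
        omega
      · rw [dif_neg hi, dif_neg (by omega : ¬ (j : ℕ) = 0)]
        have : (s.1.orderEmbOfFin s.2 ⟨(i : ℕ) - 1, by have := i.isLt; omega⟩ :
            Fin (n - 2)) < s.1.orderEmbOfFin s.2 ⟨(j : ℕ) - 1, by have := j.isLt; omega⟩ :=
          (s.1.orderEmbOfFin s.2).strictMono (by simp only [Fin.mk_lt_mk]; omega)
        have := Fin.lt_def.mp this
        omega
    have hv0 : ∀ s, vOf n d (bfun s) ⟨0, by omega⟩ = 1 := by
      intro s
      show (Gof n d (bfun s) (0 + 1) : ZMod n) - (Gof n d (bfun s) 0 : ZMod n) = 1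
      rw [Gof_succ (show 0 < d by omega), Gof_zero]
      simp only [hbfun]
      norm_num
    set F : (ZMod n)ˣ × {s : Finset (Fin (n - 2)) // s.card = d - 1} →
        {v : Fin d → ZMod n // ZeroSumFree v ∧ IrreducibleTuple v} := by
      refine fun p => ⟨fun i => (p.1 : ZMod n) * vOf n d (bfun p.2) i, ?_, ?_⟩
      · intro S hS h0
        rw [← Finset.mul_sum] at h0
        exact vOf_zsf hn (hb1 p.2) (hbn p.2) (hmono p.2) S hS
          ((Units.mul_right_eq_zero p.1).mp h0)
      · have hw0 : (p.1 : ZMod n) * vOf n d (bfun p.2) ⟨0, by omega⟩ = (p.1 : ZMod n) := by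
          rw [hv0 p.2, mul_one]
        have hdvd : (Finset.univ.gcd fun i =>
            ((p.1 : ZMod n) * vOf n d (bfun p.2) i).val) ∣
            ((p.1 : ZMod n) * vOf n d (bfun p.2) ⟨0, by omega⟩).val :=
          Finset.gcd_dvd (Finset.mem_univ _)
        rw [hw0] at hdvd
        exact Nat.Coprime.coprime_dvd_left hdvd (ZMod.val_coe_unit_coprime p.1)
    have hFinj : Function.Injective F := by
      intro p q hpq
      have hv : (fun i => (p.1 : ZMod n) * vOf n d (bfun p.2) i) =
          (fun i => (q.1 : ZMod n) * vOf n d (bfun q.2) i) := congrArg Subtype.val hpq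
      have hu : (p.1 : ZMod n) = (q.1 : ZMod n) := by
        have := congrFun hv ⟨0, by omega⟩
        rwa [hv0 p.2, hv0 q.2, mul_one, mul_one] at this
      have hu' : p.1 = q.1 := Units.ext hu
      have hvv : vOf n d (bfun p.2) = vOf n d (bfun q.2) := by
        funext i
        have := congrFun hv i
        rw [hu] at this
        exact (Units.mul_right_inj q.1).mp this
      have hb : bfun p.2 = bfun q.2 := vOf_inj hn (hbn p.2) (hbn q.2) hvv
      have hfun : ⇑(p.2.1.orderEmbOfFin p.2.2) = ⇑(q.2.1.orderEmbOfFin q.2.2) := by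
        funext j
        have hjd : (j : ℕ) + 1 < d := by have := j.isLt; omega
        have := congrFun hb ⟨(j : ℕ) + 1, hjd⟩
        simp only [hbfun, dif_neg (by omega : ¬ ((j : ℕ) + 1) = 0)] at this
        have hj' : ((⟨(j : ℕ) + 1, hjd⟩ : Fin d) : ℕ) - 1 = (j : ℕ) := rfl
        apply Fin.val_injective
        simp only [Nat.add_sub_cancel] at this
        have he : (⟨(j : ℕ), by have := j.isLt; omega⟩ : Fin (d - 1)) = j := by
          apply Fin.val_injective; rfl
        rw [he] at this
        omega
      have hrange : (↑p.2.1 : Set (Fin (n - 2))) = ↑q.2.1 := by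
        rw [← Finset.range_orderEmbOfFin p.2.1 p.2.2,
          ← Finset.range_orderEmbOfFin q.2.1 q.2.2, hfun]
      have hs : p.2 = q.2 := Subtype.ext (Finset.coe_injective hrange)
      exact Prod.ext hu' hs
    calc Nat.totient n * (n - 2).choose (d - 1)
        = Nat.card ((ZMod n)ˣ × {s : Finset (Fin (n - 2)) // s.card = d - 1}) := by
          rw [Nat.card_prod, Nat.card_eq_fintype_card, Nat.card_eq_fintype_card,
            ZMod.card_units_eq_totient, Fintype.card_finset_len, Fintype.card_fin]
      _ ≤ betaZSF n d := Nat.card_le_card_of_injective F hFinj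
end

section
/- Let d be a fixed positive integer. Then the sequence α_n^d / n^d converges to 1 as n → ∞; that is, the sequence {α_n^d} is asymptotically equivalent to {n^d}. Moreover, there exist a constant K > 0 and an integer N such that |α_n^d − n^d + (2^d − 1)·n^{d−1}| ≤ K·n^{d−2} for all n ≥ N. -/
/-!
A tuple fails to be zero-sum-free exactly when it lies in one of the kernels of
`v ↦ ∑ i ∈ S, v i`, for the `2 ^ d - 1` non-empty `S`. Each kernel has `n ^ (d - 1)` elements, and
two distinct kernels meet in `n ^ (d - 2)` elements, because for `S ≠ T` the pair of sums maps onto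
`(ZMod n)²`. The first two Bonferroni inequalities then give the size of the union up to
`(2 ^ d - 1) ^ 2 * n ^ (d - 2)`.
-/

open Finset Function

theorem AddMonoidHom.card_filter_eq_zero_mul_card_of_surjective {G H : Type*} [AddGroup G]
    [Fintype G] [AddGroup H] [DecidableEq H] (φ : G →+ H) (hφ : Surjective φ) :
    #{g | φ g = 0} * Nat.card H = Fintype.card G := by
  rw [← Fintype.card_subtype, ← Nat.card_eq_fintype_card, ← Nat.card_eq_fintype_card]
  change Nat.card φ.ker * _ = _
  rw [← φ.ker.card_mul_index, AddSubgroup.index_ker, AddMonoidHom.range_eq_top.mpr hφ,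
    AddSubgroup.card_top]

-- The second Bonferroni inequality, with the pairwise intersections counted over ordered pairs.
theorem Finset.sum_card_le_card_biUnion_add_sum_card_inter {ι α : Type*} [DecidableEq ι]
    [DecidableEq α] (F : Finset ι) (A : ι → Finset α) :
    ∑ S ∈ F, #(A S) ≤ #(F.biUnion A) + ∑ S ∈ F, ∑ T ∈ F.erase S, #(A S ∩ A T) := by
  induction F using Finset.induction_on with
  | empty => simp
  | @insert a F ha ih =>
    have h_inter : #(A a ∩ F.biUnion A) ≤ ∑ T ∈ F, #(A a ∩ A T) := by
      rw [inter_biUnion]; exact card_biUnion_le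
    have h_pairs : ∑ S ∈ insert a F, ∑ T ∈ (insert a F).erase S, #(A S ∩ A T) =
        ∑ T ∈ F, #(A a ∩ A T) +
          ∑ S ∈ F, (#(A S ∩ A a) + ∑ T ∈ F.erase S, #(A S ∩ A T)) := by
      rw [sum_insert ha, erase_insert ha]
      congr 1
      refine sum_congr rfl fun S hS => ?_
      have hSa : S ≠ a := ne_of_mem_of_not_mem hS ha
      rw [erase_insert_of_ne hSa.symm, sum_insert fun h => ha (mem_of_mem_erase h)]
    have h_drop : ∑ S ∈ F, ∑ T ∈ F.erase S, #(A S ∩ A T) ≤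
        ∑ S ∈ F, (#(A S ∩ A a) + ∑ T ∈ F.erase S, #(A S ∩ A T)) :=
      sum_le_sum fun S _ => Nat.le_add_left _ _
    rw [sum_insert ha, biUnion_insert, h_pairs]
    have := card_union_add_card_inter (A a) (F.biUnion A)
    omega

section SubsetSum

variable {ι M : Type*} [AddCommGroup M]

def subsetSum (S : Finset ι) : (ι → M) →+ M :=
  AddMonoidHom.mk' (fun v => ∑ i ∈ S, v i) fun _ _ => sum_add_distrib

@[simp] theorem subsetSum_apply (S : Finset ι) (v : ι → M) : subsetSum S v = ∑ i ∈ S, v i :=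
  rfl

variable [DecidableEq ι]

theorem subsetSum_single {S : Finset ι} {i : ι} (hi : i ∈ S) (x : M) :
    subsetSum S (Pi.single i x) = x := by
  simp [sum_pi_single', hi]

theorem subsetSum_single_of_notMem {S : Finset ι} {i : ι} (hi : i ∉ S) (x : M) :
    subsetSum S (Pi.single i x) = 0 := by
  simp [sum_pi_single', hi]

theorem subsetSum_surjective {S : Finset ι} (hS : S.Nonempty) :
    Surjective (subsetSum (M := M) S) :=
  let ⟨i, hi⟩ := hS
  fun x => ⟨Pi.single i x, subsetSum_single hi x⟩

theorem subsetSum_prod_surjective {S T : Finset ι} {i j : ι} (hiS : i ∈ S) (hiT : i ∉ T)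
    (hjT : j ∈ T) : Surjective ((subsetSum (M := M) S).prod (subsetSum T)) := by
  rintro ⟨x, y⟩
  set w : ι → M := Pi.single j y
  refine ⟨w + Pi.single i (x - subsetSum S w), ?_⟩
  simp [map_add, subsetSum_single hiS, subsetSum_single hjT, subsetSum_single_of_notMem hiT, w]

variable [Fintype ι] [Fintype M] [DecidableEq M]

theorem card_subsetSum_eq_zero_mul {S : Finset ι} (hS : S.Nonempty) :
    #{v : ι → M | subsetSum S v = 0} * Fintype.card M = Fintype.card M ^ Fintype.card ι := by
  have :=
    AddMonoidHom.card_filter_eq_zero_mul_card_of_surjective _ (subsetSum_surjective (M := M) hS)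
  rwa [Nat.card_eq_fintype_card, Fintype.card_fun] at this

theorem card_subsetSum_eq_zero {S : Finset ι} (hS : S.Nonempty) :
    #{v : ι → M | subsetSum S v = 0} = Fintype.card M ^ (Fintype.card ι - 1) := by
  have hι : 1 ≤ Fintype.card ι := Fintype.card_pos_iff.mpr ⟨hS.choose⟩
  have hM : 0 < Fintype.card M := Fintype.card_pos
  have := card_subsetSum_eq_zero_mul (M := M) hS
  rw [← Nat.sub_add_cancel hι, pow_succ] at this
  exact Nat.eq_of_mul_eq_mul_right hM this

theorem card_subsetSum_eq_zero_and_of_mem_of_notMem {S T : Finset ι} {i j : ι} (hiS : i ∈ S)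
    (hiT : i ∉ T) (hjT : j ∈ T) :
    #{v : ι → M | subsetSum S v = 0 ∧ subsetSum T v = 0} =
      Fintype.card M ^ (Fintype.card ι - 2) := by
  have hι : 2 ≤ Fintype.card ι :=
    Fintype.one_lt_card_iff.mpr ⟨i, j, fun h => hiT (h ▸ hjT)⟩
  have hM : 0 < Fintype.card M := Fintype.card_pos
  have := AddMonoidHom.card_filter_eq_zero_mul_card_of_surjective _
    (subsetSum_prod_surjective (M := M) hiS hiT hjT)
  simp only [AddMonoidHom.prod_apply, Prod.mk_eq_zero, Nat.card_eq_fintype_card,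
    Fintype.card_prod, Fintype.card_fun] at this
  rw [← Nat.sub_add_cancel hι, pow_add, ← sq] at this
  exact Nat.eq_of_mul_eq_mul_right (pow_pos hM 2) this

theorem card_subsetSum_eq_zero_and {S T : Finset ι} (hS : S.Nonempty) (hT : T.Nonempty)
    (hST : S ≠ T) :
    #{v : ι → M | subsetSum S v = 0 ∧ subsetSum T v = 0} =
      Fintype.card M ^ (Fintype.card ι - 2) := by
  by_cases hsub : S ⊆ T
  · obtain ⟨i, hiT, hiS⟩ := not_subset.mp fun h => hST (subset_antisymm hsub h)
    obtain ⟨j, hjS⟩ := hS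
    rw [filter_congr fun _ _ => and_comm]
    exact card_subsetSum_eq_zero_and_of_mem_of_notMem hiT hiS hjS
  · obtain ⟨i, hiS, hiT⟩ := not_subset.mp hsub
    obtain ⟨j, hjT⟩ := hT
    exact card_subsetSum_eq_zero_and_of_mem_of_notMem hiS hiT hjT

variable (ι M) in
def zeroSumTuples : Finset (ι → M) :=
  ((univ : Finset (Finset ι)).erase ∅).biUnion fun S => {v | subsetSum S v = 0}

theorem mem_zeroSumTuples {v : ι → M} :
    v ∈ zeroSumTuples ι M ↔ ∃ S : Finset ι, S.Nonempty ∧ ∑ i ∈ S, v i = 0 := by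
  simp only [zeroSumTuples, mem_biUnion, mem_erase, mem_univ, and_true, mem_filter_univ]
  simp only [subsetSum_apply, nonempty_iff_ne_empty]

theorem card_univ_finset_erase_empty :
    #((univ : Finset (Finset ι)).erase ∅) = 2 ^ Fintype.card ι - 1 := by
  rw [card_erase_of_mem (mem_univ _), card_univ, Fintype.card_finset]

theorem card_zeroSumTuples_mul_le :
    #(zeroSumTuples ι M) * Fintype.card M ≤
      (2 ^ Fintype.card ι - 1) * Fintype.card M ^ Fintype.card ι := by
  calc #(zeroSumTuples ι M) * Fintype.card M
      ≤ (∑ S ∈ univ.erase ∅, #{v : ι → M | subsetSum S v = 0}) * Fintype.card M :=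
        Nat.mul_le_mul_right _ card_biUnion_le
    _ = _ := by
      rw [sum_mul, sum_congr rfl fun S hS =>
          card_subsetSum_eq_zero_mul (nonempty_iff_ne_empty.mpr (ne_of_mem_erase hS)),
        sum_const, card_univ_finset_erase_empty, smul_eq_mul]

theorem card_zeroSumTuples_le :
    #(zeroSumTuples ι M) ≤
      (2 ^ Fintype.card ι - 1) * Fintype.card M ^ (Fintype.card ι - 1) := by
  calc #(zeroSumTuples ι M)
      ≤ ∑ S ∈ univ.erase ∅, #{v : ι → M | subsetSum S v = 0} := card_biUnion_le
    _ = _ := by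
      rw [sum_congr rfl fun S hS =>
          card_subsetSum_eq_zero (nonempty_iff_ne_empty.mpr (ne_of_mem_erase hS)),
        sum_const, card_univ_finset_erase_empty, smul_eq_mul]

theorem le_card_zeroSumTuples_add :
    (2 ^ Fintype.card ι - 1) * Fintype.card M ^ (Fintype.card ι - 1) ≤
      #(zeroSumTuples ι M) + (2 ^ Fintype.card ι - 1) * (2 ^ Fintype.card ι - 2) *
        Fintype.card M ^ (Fintype.card ι - 2) := by
  set F := (univ : Finset (Finset ι)).erase ∅
  set A : Finset ι → Finset (ι → M) := fun S => {v | subsetSum S v = 0}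
  have hA : ∀ S ∈ F, #(A S) = Fintype.card M ^ (Fintype.card ι - 1) := fun S hS =>
    card_subsetSum_eq_zero (nonempty_iff_ne_empty.mpr (ne_of_mem_erase hS))
  have hAA : ∀ S ∈ F, ∑ T ∈ F.erase S, #(A S ∩ A T) =
      (2 ^ Fintype.card ι - 2) * Fintype.card M ^ (Fintype.card ι - 2) := by
    intro S hS
    have hS' := nonempty_iff_ne_empty.mpr (ne_of_mem_erase hS)
    rw [sum_congr rfl fun T hT => ?_, sum_const, card_erase_of_mem hS, card_univ_finset_erase_empty,
      smul_eq_mul, Nat.sub_sub]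
    rw [← filter_and]
    exact card_subsetSum_eq_zero_and hS'
      (nonempty_iff_ne_empty.mpr (ne_of_mem_erase (mem_of_mem_erase hT)))
      (ne_of_mem_erase hT).symm
  have h_bonferroni := sum_card_le_card_biUnion_add_sum_card_inter F A
  rw [sum_congr rfl hA, sum_congr rfl hAA, sum_const, sum_const, card_univ_finset_erase_empty,
    smul_eq_mul, smul_eq_mul, ← mul_assoc] at h_bonferroni
  exact h_bonferroni

end SubsetSum

theorem zeroSumFree_iff_notMem_zeroSumTuples {n d : ℕ} [NeZero n] (v : Fin d → ZMod n) :
    ZeroSumFree v ↔ v ∉ zeroSumTuples (Fin d) (ZMod n) := by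
  simp [ZeroSumFree, mem_zeroSumTuples]

theorem alphaZSF_add_card_zeroSumTuples (n d : ℕ) [NeZero n] :
    alphaZSF n d + #(zeroSumTuples (Fin d) (ZMod n)) = n ^ d := by
  have h_compl : alphaZSF n d = #(zeroSumTuples (Fin d) (ZMod n))ᶜ := by
    rw [alphaZSF, Nat.card_congr (Equiv.subtypeEquivRight fun v =>
      (zeroSumFree_iff_notMem_zeroSumTuples v).trans mem_compl.symm), Nat.card_eq_fintype_card,
      Fintype.card_coe]
  rw [h_compl, card_compl_add_card, Fintype.card_fun, ZMod.card, Fintype.card_fin]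

theorem abs_alphaZSF_sub_le (n d : ℕ) [NeZero n] :
    |(alphaZSF n d : ℝ) - n ^ d + (2 ^ d - 1) * n ^ (d - 1)| ≤
      (2 ^ d - 1) ^ 2 * n ^ (d - 2) := by
  have h_alpha := congrArg (Nat.cast (R := ℝ)) (alphaZSF_add_card_zeroSumTuples n d)
  have h_upper := card_zeroSumTuples_le (ι := Fin d) (M := ZMod n)
  have h_lower := le_card_zeroSumTuples_add (ι := Fin d) (M := ZMod n)
  simp only [Fintype.card_fin, ZMod.card] at h_upper h_lower
  have h_pairs : (2 ^ d - 1) * (2 ^ d - 2) ≤ (2 ^ d - 1) ^ 2 := by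
    rw [sq]; exact Nat.mul_le_mul_left _ (by omega)
  replace h_lower := h_lower.trans (Nat.add_le_add_left (Nat.mul_le_mul_right _ h_pairs) _)
  replace h_upper := (Nat.cast_le (α := ℝ)).2 h_upper
  replace h_lower := (Nat.cast_le (α := ℝ)).2 h_lower
  push_cast [Nat.cast_sub Nat.one_le_two_pow] at h_alpha h_upper h_lower
  have h_error_nonneg : (0 : ℝ) ≤ (2 ^ d - 1) ^ 2 * n ^ (d - 2) := by positivity
  rw [abs_le]
  constructor <;> linarith

theorem one_sub_div_le_alphaZSF_div_pow (n d : ℕ) [NeZero n] :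
    1 - (2 ^ d - 1) / (n : ℝ) ≤ alphaZSF n d / (n : ℝ) ^ d := by
  have h_alpha := congrArg (Nat.cast (R := ℝ)) (alphaZSF_add_card_zeroSumTuples n d)
  have h_union :=
    (Nat.cast_le (α := ℝ)).2 (card_zeroSumTuples_mul_le (ι := Fin d) (M := ZMod n))
  simp only [Fintype.card_fin, ZMod.card] at h_union
  push_cast [Nat.cast_sub Nat.one_le_two_pow] at h_alpha h_union
  have hn : (0 : ℝ) < n := Nat.cast_pos.2 (Nat.pos_of_ne_zero (NeZero.ne n))
  have h_union' : (#(zeroSumTuples (Fin d) (ZMod n)) : ℝ) ≤ (2 ^ d - 1) * n ^ d / n :=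
    (le_div_iff₀ hn).2 h_union
  rw [le_div_iff₀ (pow_pos hn d)]
  calc (1 - (2 ^ d - 1) / (n : ℝ)) * n ^ d = n ^ d - (2 ^ d - 1) * n ^ d / n := by ring
    _ ≤ alphaZSF n d := by linarith

theorem alphaZSF_div_pow_le_one (n d : ℕ) [NeZero n] : alphaZSF n d / (n : ℝ) ^ d ≤ 1 := by
  have h_alpha := alphaZSF_add_card_zeroSumTuples n d
  rw [div_le_one (pow_pos (Nat.cast_pos.2 (Nat.pos_of_ne_zero (NeZero.ne n))) d)]
  exact_mod_cast (Nat.le.intro h_alpha)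

open Filter in
theorem alpha_asymptotic_general (d : ℕ) :
    Filter.Tendsto (fun n : ℕ => (alphaZSF n d : ℝ) / (n : ℝ) ^ d) Filter.atTop (nhds 1) ∧
    ∃ K : ℝ, 0 < K ∧ ∃ N : ℕ, ∀ n : ℕ, N ≤ n →
      |(alphaZSF n d : ℝ) - (n : ℝ) ^ d + (2 ^ d - 1) * (n : ℝ) ^ (d - 1)| ≤
        K * (n : ℝ) ^ (d - 2) := by
  constructor
  · have h_lower : Tendsto (fun n : ℕ => 1 - (2 ^ d - 1) / (n : ℝ)) atTop (nhds 1) := by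
      simpa using tendsto_const_nhds.sub (tendsto_const_div_atTop_nhds_zero_nat ((2 : ℝ) ^ d - 1))
    refine tendsto_of_tendsto_of_tendsto_of_le_of_le' h_lower tendsto_const_nhds ?_ ?_ <;>
      filter_upwards [eventually_ne_atTop 0] with n hn <;> have : NeZero n := ⟨hn⟩
    · exact one_sub_div_le_alphaZSF_div_pow n d
    · exact alphaZSF_div_pow_le_one n d
  · refine ⟨(2 ^ d - 1) ^ 2 + 1, by positivity, 1, fun n hn => ?_⟩
    have : NeZero n := ⟨by omega⟩
    refine (abs_alphaZSF_sub_le n d).trans (mul_le_mul_of_nonneg_right ?_ (by positivity))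
    linarith

open Filter in
theorem alpha_asymptotic (d : ℕ) (hd : 0 < d) :
    Filter.Tendsto (fun n : ℕ => (alphaZSF n d : ℝ) / (n : ℝ) ^ d) Filter.atTop (nhds 1) ∧
    ∃ K : ℝ, 0 < K ∧ ∃ N : ℕ, ∀ n : ℕ, N ≤ n →
      |(alphaZSF n d : ℝ) - (n : ℝ) ^ d + (2 ^ d - 1) * (n : ℝ) ^ (d - 1)| ≤
        K * (n : ℝ) ^ (d - 2) :=
  alpha_asymptotic_general d
end
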